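/- arXiv:2107.13282 — 7 statements merged into one kernel-verified Lean document; each statement's English description precedes it below -/
import Mathlib

section
/- Let G_{n,m} be the complete bipartite graph with sides of sizes n ≥ 1 and m ≥ 1. Then every partition 𝒫 of the vertex set of G_{n,m} satisfies d(𝒫) ≤ nm/(n+m) = d(G_{n,m}). -/
open Finset

/-- The number of edges of `G` with both endpoints in `S`. -/
noncomputable def edgesIn {V : Type*} (G : SimpleGraph V) (S : Finset V) : ℕ :=
  Set.ncard {e : Sym2 V | e ∈ G.edgeSet ∧ ∀ v ∈ e, v ∈ S}

/-- The density of the set `S` of vertices in `G`: `|E(S)|/|S|`. -/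
noncomputable def density {V : Type*} (G : SimpleGraph V) (S : Finset V) : ℚ :=
  (edgesIn G S : ℚ) / (S.card : ℚ)

/-- The density of a partition: the sum of the densities of its parts. -/
noncomputable def partDensity {V : Type*} [DecidableEq V] (G : SimpleGraph V) {s : Finset V}
    (P : Finpartition s) : ℚ :=
  ∑ p ∈ P.parts, density G p

section Aux

lemma superadd (a b c d : ℚ) (ha : 0 ≤ a) (hb : 0 ≤ b) (hc : 0 ≤ c) (hd : 0 ≤ d) :
    a*b/(a+b) + c*d/(c+d) ≤ (a+c)*(b+d)/((a+c)+(b+d)) := by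
  rcases eq_or_lt_of_le (by linarith : (0:ℚ) ≤ a + b) with h1 | h1
  · have ha0 : a = 0 := by linarith
    have hb0 : b = 0 := by linarith
    simp [ha0, hb0]
  rcases eq_or_lt_of_le (by linarith : (0:ℚ) ≤ c + d) with h2 | h2
  · have hc0 : c = 0 := by linarith
    have hd0 : d = 0 := by linarith
    simp [hc0, hd0]
  have h3 : (0:ℚ) < (a+c)+(b+d) := by linarith
  rw [div_add_div _ _ (ne_of_gt h1) (ne_of_gt h2), div_le_div_iff₀ (by positivity) h3]
  nlinarith [sq_nonneg (a*d - b*c)]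

lemma sum_superadd {ι : Type*} (s : Finset ι) (a b : ι → ℚ)
    (ha : ∀ i ∈ s, 0 ≤ a i) (hb : ∀ i ∈ s, 0 ≤ b i) :
    ∑ i ∈ s, a i * b i / (a i + b i) ≤
      (∑ i ∈ s, a i) * (∑ i ∈ s, b i) / ((∑ i ∈ s, a i) + (∑ i ∈ s, b i)) := by
  induction s using Finset.cons_induction with
  | empty => simp
  | cons j s hj ih =>
    rw [Finset.sum_cons, Finset.sum_cons, Finset.sum_cons]
    calc a j * b j / (a j + b j) + ∑ i ∈ s, a i * b i / (a i + b i)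
        ≤ a j * b j / (a j + b j) +
          (∑ i ∈ s, a i) * (∑ i ∈ s, b i) / ((∑ i ∈ s, a i) + (∑ i ∈ s, b i)) := by
          gcongr _ + ?_
          exact ih (fun i hi => ha i (Finset.mem_cons_of_mem hi))
            (fun i hi => hb i (Finset.mem_cons_of_mem hi))
      _ ≤ _ := by
          apply superadd
          · exact ha j (Finset.mem_cons_self j s)
          · exact hb j (Finset.mem_cons_self j s)
          · exact Finset.sum_nonneg fun i hi => ha i (Finset.mem_cons_of_mem hi)
          · exact Finset.sum_nonneg fun i hi => hb i (Finset.mem_cons_of_mem hi)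

variable {n m : ℕ}

def SL (S : Finset (Fin n ⊕ Fin m)) : Finset (Fin n) :=
  univ.filter (fun a => Sum.inl a ∈ S)

def SR (S : Finset (Fin n ⊕ Fin m)) : Finset (Fin m) :=
  univ.filter (fun b => Sum.inr b ∈ S)

lemma edgesIn_eq (S : Finset (Fin n ⊕ Fin m)) :
    edgesIn (completeBipartiteGraph (Fin n) (Fin m)) S = (SL S).card * (SR S).card := by
  have hset : {e : Sym2 (Fin n ⊕ Fin m) |
      e ∈ (completeBipartiteGraph (Fin n) (Fin m)).edgeSet ∧ ∀ v ∈ e, v ∈ S} =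
      ↑(((SL S) ×ˢ (SR S)).image fun p => s(Sum.inl p.1, Sum.inr p.2)) := by
    ext e
    induction e with
    | h x y =>
      simp only [SimpleGraph.mem_edgeSet, completeBipartiteGraph_adj, Set.mem_setOf_eq,
        Finset.coe_image, Set.mem_image, Finset.mem_coe, Finset.mem_product, Sym2.mem_iff,
        SL, SR, Finset.mem_filter, Finset.mem_univ, true_and]
      constructor
      · rintro ⟨(⟨hx, hy⟩ | ⟨hx, hy⟩), hv⟩
        · obtain ⟨a, rfl⟩ := Sum.isLeft_iff.mp hx
          obtain ⟨b, rfl⟩ := Sum.isRight_iff.mp hy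
          exact ⟨(a, b), ⟨hv _ (Or.inl rfl), hv _ (Or.inr rfl)⟩, rfl⟩
        · obtain ⟨b, rfl⟩ := Sum.isRight_iff.mp hx
          obtain ⟨a, rfl⟩ := Sum.isLeft_iff.mp hy
          exact ⟨(a, b), ⟨hv _ (Or.inr rfl), hv _ (Or.inl rfl)⟩, Sym2.eq_swap⟩
      · rintro ⟨⟨a, b⟩, ⟨ha, hb⟩, he⟩
        rw [Sym2.eq_iff] at he
        rcases he with ⟨rfl, rfl⟩ | ⟨rfl, rfl⟩
        · exact ⟨Or.inl ⟨rfl, rfl⟩, by rintro v (rfl | rfl) <;> assumption⟩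
        · exact ⟨Or.inr ⟨rfl, rfl⟩, by rintro v (rfl | rfl) <;> assumption⟩
  rw [edgesIn, hset, Set.ncard_coe_finset, Finset.card_image_of_injective, Finset.card_product]
  rintro ⟨a, b⟩ ⟨a', b'⟩ h
  simp only [Sym2.eq_iff] at h
  rcases h with ⟨h1, h2⟩ | ⟨h1, h2⟩ <;> simp_all

lemma card_eq (S : Finset (Fin n ⊕ Fin m)) : S.card = (SL S).card + (SR S).card := by
  have h : S = (SL S).image Sum.inl ∪ (SR S).image Sum.inr := by
    ext x
    cases x <;> simp [SL, SR]
  have hdisj : Disjoint ((SL S).image Sum.inl) ((SR S).image Sum.inr) := by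
    simp [Finset.disjoint_left]
  conv_lhs => rw [h]
  rw [Finset.card_union_of_disjoint hdisj,
    Finset.card_image_of_injective _ Sum.inl_injective,
    Finset.card_image_of_injective _ Sum.inr_injective]

lemma sum_SL (P : Finpartition (univ : Finset (Fin n ⊕ Fin m))) :
    ∑ p ∈ P.parts, (SL p).card = n := by
  have h1 : ∀ p ∈ P.parts, (SL p).card = ∑ a : Fin n, if Sum.inl a ∈ p then 1 else 0 := by
    intro p _
    rw [SL, Finset.card_filter]
  rw [Finset.sum_congr rfl h1, Finset.sum_comm]
  have h2 : ∀ a : Fin n, ∑ p ∈ P.parts, (if Sum.inl a ∈ p then 1 else 0) = 1 := by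
    intro a
    obtain ⟨t, ⟨ht, hat⟩, huniq⟩ := P.existsUnique_mem (a := Sum.inl a) (Finset.mem_univ _)
    rw [Finset.sum_eq_single t]
    · simp [hat]
    · intro p hp hne
      simp only [ite_eq_right_iff]
      intro hap
      exact absurd (huniq p ⟨hp, hap⟩) hne
    · intro h; exact absurd ht h
  rw [Finset.sum_congr rfl (fun a _ => h2 a)]
  simp

lemma sum_SR (P : Finpartition (univ : Finset (Fin n ⊕ Fin m))) :
    ∑ p ∈ P.parts, (SR p).card = m := by
  have h1 : ∀ p ∈ P.parts, (SR p).card = ∑ b : Fin m, if Sum.inr b ∈ p then 1 else 0 := by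
    intro p _
    rw [SR, Finset.card_filter]
  rw [Finset.sum_congr rfl h1, Finset.sum_comm]
  have h2 : ∀ b : Fin m, ∑ p ∈ P.parts, (if Sum.inr b ∈ p then 1 else 0) = 1 := by
    intro b
    obtain ⟨t, ⟨ht, hbt⟩, huniq⟩ := P.existsUnique_mem (a := Sum.inr b) (Finset.mem_univ _)
    rw [Finset.sum_eq_single t]
    · simp [hbt]
    · intro p hp hne
      simp only [ite_eq_right_iff]
      intro hbp
      exact absurd (huniq p ⟨hp, hbp⟩) hne
    · intro h; exact absurd ht h
  rw [Finset.sum_congr rfl (fun b _ => h2 b)]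
  simp

end Aux

theorem stmt2 (n m : ℕ) (hn : 1 ≤ n) (hm : 1 ≤ m)
    (P : Finpartition (univ : Finset (Fin n ⊕ Fin m))) :
    partDensity (completeBipartiteGraph (Fin n) (Fin m)) P ≤ (n * m : ℚ) / (n + m) ∧
      density (completeBipartiteGraph (Fin n) (Fin m)) (univ : Finset (Fin n ⊕ Fin m)) =
        (n * m : ℚ) / (n + m) := by
  constructor
  · have h1 : partDensity (completeBipartiteGraph (Fin n) (Fin m)) P =
        ∑ p ∈ P.parts, ((SL p).card : ℚ) * ((SR p).card : ℚ)
          / (((SL p).card : ℚ) + ((SR p).card : ℚ)) := by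
      refine Finset.sum_congr rfl fun p hp => ?_
      rw [density, edgesIn_eq, card_eq]
      push_cast
      ring
    rw [h1]
    have hA : ∑ p ∈ P.parts, ((SL p).card : ℚ) = n := by
      rw [← Nat.cast_sum, sum_SL]
    have hB : ∑ p ∈ P.parts, ((SR p).card : ℚ) = m := by
      rw [← Nat.cast_sum, sum_SR]
    calc ∑ p ∈ P.parts, ((SL p).card : ℚ) * ((SR p).card : ℚ)
          / (((SL p).card : ℚ) + ((SR p).card : ℚ))
        ≤ (∑ p ∈ P.parts, ((SL p).card : ℚ)) * (∑ p ∈ P.parts, ((SR p).card : ℚ))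
          / ((∑ p ∈ P.parts, ((SL p).card : ℚ)) + (∑ p ∈ P.parts, ((SR p).card : ℚ))) :=
        sum_superadd _ _ _ (fun p _ => by positivity) (fun p _ => by positivity)
      _ = (n * m : ℚ) / (n + m) := by rw [hA, hB]
  · rw [density, edgesIn_eq]
    have hL : SL (univ : Finset (Fin n ⊕ Fin m)) = univ := by
      ext a; simp [SL]
    have hR : SR (univ : Finset (Fin n ⊕ Fin m)) = univ := by
      ext b; simp [SR]
    rw [hL, hR, Finset.card_univ, Finset.card_univ, Finset.card_univ, Fintype.card_sum,
      Fintype.card_fin, Fintype.card_fin]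
    push_cast
    ring
end

section
/- Let G = (A,B,E) be the complete bipartite graph with |A| = n ≥ 1 and |B| = m ≥ 1, and let 𝒫 = {V_1, …, V_k} be a partition of A ∪ B. Then d(𝒫) = nm/(n+m) if and only if for every i ∈ {1, …, k}, setting n_i = |V_i ∩ A| and m_i = |V_i ∩ B|, one has n_i ≥ 1, m_i ≥ 1, and n_i·m = m_i·n (i.e., each part induces a complete bipartite graph G_{n_i,m_i} with n_i/m_i = n/m). -/
open Finset

lemma edgesIn_eq_s3 (n m : ℕ) (p : Finset (Fin n ⊕ Fin m)) :
    edgesIn (completeBipartiteGraph (Fin n) (Fin m)) p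
      = (p.filter fun v => v.isLeft).card * (p.filter fun v => v.isRight).card := by
  classical
  rw [edgesIn]
  have hset : {e : Sym2 (Fin n ⊕ Fin m) |
      e ∈ (completeBipartiteGraph (Fin n) (Fin m)).edgeSet ∧ ∀ v ∈ e, v ∈ p}
      = ↑(((p.filter fun v => v.isLeft) ×ˢ (p.filter fun v => v.isRight)).image
          fun x => s(x.1, x.2)) := by
    ext e
    induction e using Sym2.ind with
    | _ u v =>
      simp only [Set.mem_setOf_eq, SimpleGraph.mem_edgeSet, completeBipartiteGraph_adj,
        Sym2.mem_iff, Finset.coe_image, Set.mem_image, Finset.mem_coe, Finset.mem_product,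
        Finset.mem_filter]
      constructor
      · rintro ⟨hadj, hmem⟩
        have hu := hmem u (Or.inl rfl)
        have hv := hmem v (Or.inr rfl)
        rcases hadj with ⟨h1, h2⟩ | ⟨h1, h2⟩
        · exact ⟨(u, v), ⟨⟨hu, h1⟩, hv, h2⟩, rfl⟩
        · exact ⟨(v, u), ⟨⟨hv, h2⟩, hu, h1⟩, Sym2.eq_swap⟩
      · rintro ⟨⟨a, b⟩, ⟨⟨ha, hal⟩, hb, hbr⟩, heq⟩
        rw [Sym2.eq_iff] at heq
        rcases heq with ⟨rfl, rfl⟩ | ⟨rfl, rfl⟩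
        · exact ⟨Or.inl ⟨hal, hbr⟩, by rintro w (rfl | rfl) <;> assumption⟩
        · exact ⟨Or.inr ⟨hbr, hal⟩, by rintro w (rfl | rfl) <;> assumption⟩
  rw [hset, Set.ncard_coe_finset, Finset.card_image_of_injOn, Finset.card_product]
  rintro ⟨a, b⟩ hab ⟨c, d⟩ hcd h
  simp only [Finset.mem_coe, Finset.mem_product, Finset.mem_filter] at hab hcd
  rw [Sym2.eq_iff] at h
  rcases h with ⟨rfl, rfl⟩ | ⟨rfl, rfl⟩
  · rfl
  · exfalso
    have h1 := hab.2.2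
    have h2 := hcd.1.2
    cases b <;> simp_all

lemma card_split (n m : ℕ) (p : Finset (Fin n ⊕ Fin m)) :
    p.card = (p.filter fun v => v.isLeft).card + (p.filter fun v => v.isRight).card := by
  classical
  have h : (p.filter fun v => v.isRight) = (p.filter fun v => ¬ (v.isLeft = true)) := by
    apply Finset.filter_congr
    intro v _
    cases v <;> simp
  rw [h, Finset.card_filter_add_card_filter_not]

lemma sum_filter_card {α : Type*} [DecidableEq α] {s : Finset α} (P : Finpartition s)
    (Q : α → Prop) [DecidablePred Q] :
    ∑ p ∈ P.parts, (p.filter Q).card = (s.filter Q).card := by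
  classical
  conv_rhs => rw [← P.biUnion_parts]
  rw [Finset.filter_biUnion, Finset.card_biUnion]
  · simp
  · intro x hx y hy hxy
    exact Finset.disjoint_filter_filter (P.disjoint hx hy hxy)

lemma filter_left_card (n m : ℕ) :
    ((univ : Finset (Fin n ⊕ Fin m)).filter fun v => v.isLeft).card = n := by
  have : ((univ : Finset (Fin n ⊕ Fin m)).filter fun v => v.isLeft)
      = univ.map ⟨Sum.inl, Sum.inl_injective⟩ := by
    ext v
    cases v <;> simp
  simp [this]

lemma filter_right_card (n m : ℕ) :
    ((univ : Finset (Fin n ⊕ Fin m)).filter fun v => v.isRight).card = m := by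
  have : ((univ : Finset (Fin n ⊕ Fin m)).filter fun v => v.isRight)
      = univ.map ⟨Sum.inr, Sum.inr_injective⟩ := by
    ext v
    cases v <;> simp
  simp [this]

lemma key (nq mq a b : ℚ) (hn : 0 < nq) (hm : 0 < mq) (ha : 0 ≤ a) (hb : 0 ≤ b)
    (hab : 0 < a + b) :
    a * b / (a + b) ≤ (mq^2 * a + nq^2 * b) / (nq + mq)^2 ∧
    (a * b / (a + b) = (mq^2 * a + nq^2 * b) / (nq + mq)^2 ↔ mq * a = nq * b) := by
  have hs : (0:ℚ) < (nq + mq)^2 := by positivity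
  constructor
  · rw [div_le_div_iff₀ hab hs]
    nlinarith [sq_nonneg (mq*a - nq*b)]
  · rw [div_eq_div_iff hab.ne' hs.ne']
    constructor
    · intro h
      have h2 : (mq*a - nq*b)^2 = 0 := by nlinarith
      have h3 : mq*a - nq*b = 0 := by
        exact pow_eq_zero_iff (two_ne_zero) |>.mp h2
      linarith
    · intro h
      linear_combination (-(mq*a - nq*b)) * h

theorem stmt3 (n m : ℕ) (hn : 1 ≤ n) (hm : 1 ≤ m)
    (P : Finpartition (univ : Finset (Fin n ⊕ Fin m))) :
    partDensity (completeBipartiteGraph (Fin n) (Fin m)) P = (n * m : ℚ) / (n + m) ↔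
      ∀ p ∈ P.parts,
        1 ≤ (p.filter fun v => v.isLeft).card ∧
        1 ≤ (p.filter fun v => v.isRight).card ∧
        (p.filter fun v => v.isLeft).card * m = (p.filter fun v => v.isRight).card * n := by
  classical
  set nl : Finset (Fin n ⊕ Fin m) → ℕ := fun p => (p.filter fun v => v.isLeft).card with hnl
  set nr : Finset (Fin n ⊕ Fin m) → ℕ := fun p => (p.filter fun v => v.isRight).card with hnr
  have hnq : (0:ℚ) < n := by exact_mod_cast hn
  have hmq : (0:ℚ) < m := by exact_mod_cast hm
  have hdens : ∀ p ∈ P.parts, density (completeBipartiteGraph (Fin n) (Fin m)) p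
      = (nl p * nr p : ℚ) / (nl p + nr p) := by
    intro p hp
    rw [density, edgesIn_eq_s3, card_split n m p]
    push_cast
    rfl
  have hpos : ∀ p ∈ P.parts, (0:ℚ) < nl p + nr p := by
    intro p hp
    have h1 : 0 < p.card := Finset.card_pos.mpr (P.nonempty_of_mem_parts hp)
    rw [card_split n m p] at h1
    exact_mod_cast h1
  have hsuml : ∑ p ∈ P.parts, (nl p : ℚ) = n := by
    have := sum_filter_card P (fun v : Fin n ⊕ Fin m => v.isLeft)
    rw [filter_left_card] at this
    exact_mod_cast this
  have hsumr : ∑ p ∈ P.parts, (nr p : ℚ) = m := by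
    have := sum_filter_card P (fun v : Fin n ⊕ Fin m => v.isRight)
    rw [filter_right_card] at this
    exact_mod_cast this
  have hpd : partDensity (completeBipartiteGraph (Fin n) (Fin m)) P
      = ∑ p ∈ P.parts, (nl p * nr p : ℚ) / (nl p + nr p) := by
    rw [partDensity]
    exact Finset.sum_congr rfl hdens
  have hgsum : ∑ p ∈ P.parts, ((m:ℚ)^2 * nl p + (n:ℚ)^2 * nr p) / ((n:ℚ) + m)^2
      = (n * m : ℚ) / (n + m) := by
    rw [← Finset.sum_div, Finset.sum_add_distrib, ← Finset.mul_sum, ← Finset.mul_sum,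
      hsuml, hsumr]
    have : (0:ℚ) < (n:ℚ) + m := by positivity
    field_simp
    ring
  rw [hpd]
  constructor
  · intro h
    have heq : ∀ p ∈ P.parts, (nl p * nr p : ℚ) / (nl p + nr p)
        = ((m:ℚ)^2 * nl p + (n:ℚ)^2 * nr p) / ((n:ℚ) + m)^2 := by
      rw [← Finset.sum_eq_sum_iff_of_le (fun p hp =>
        (key n m (nl p) (nr p) hnq hmq (by positivity) (by positivity) (hpos p hp)).1)]
      rw [h, hgsum]
    intro p hp
    have hk := (key (n:ℚ) m (nl p) (nr p) hnq hmq (by positivity) (by positivity)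
      (hpos p hp)).2.mp (heq p hp)
    have hnat : nl p * m = nr p * n := by
      have : (nl p : ℚ) * m = (nr p : ℚ) * n := by linarith
      exact_mod_cast this
    have hsum1 : 1 ≤ nl p + nr p := by
      have h1 : 0 < p.card := Finset.card_pos.mpr (P.nonempty_of_mem_parts hp)
      rw [card_split n m p] at h1
      exact h1
    have h1 : 1 ≤ nl p := by
      rcases Nat.eq_zero_or_pos (nl p) with h0 | h0
      · exfalso
        rw [h0, Nat.zero_mul] at hnat
        rcases Nat.mul_eq_zero.mp hnat.symm with h | h <;> omega
      · exact h0
    have h2 : 1 ≤ nr p := by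
      rcases Nat.eq_zero_or_pos (nr p) with h0 | h0
      · exfalso
        rw [h0, Nat.zero_mul] at hnat
        rcases Nat.mul_eq_zero.mp hnat with h | h <;> omega
      · exact h0
    exact ⟨h1, h2, hnat⟩
  · intro h
    rw [← hgsum]
    apply Finset.sum_congr rfl
    intro p hp
    obtain ⟨h1, h2, h3⟩ := h p hp
    apply (key (n:ℚ) m (nl p) (nr p) hnq hmq (by positivity) (by positivity) (hpos p hp)).2.mpr
    have : (nl p : ℚ) * m = (nr p : ℚ) * n := by exact_mod_cast h3
    linarith
end

section
/- Let G = (V,E) be a cubic graph (every vertex has degree 3) with no connected component whose induced subgraph is isomorphic to K4. Then for every nonempty subset S ⊆ V, 3·|E(S)| ≤ |S|²; equivalently, for every partition 𝒫 of V and every vertex v ∈ V, u_𝒫(v) ≤ 1/3. -/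
open Finset

/-- The utility of a nonempty set `P` of vertices: `u(P) = |E(P)|/|P|²`. -/
noncomputable def utility {V : Type*} (G : SimpleGraph V) (S : Finset V) : ℚ :=
  (edgesIn G S : ℚ) / ((S.card : ℚ) ^ 2)

/-- `S` is the vertex set of a connected component of `G` inducing a `K₄`:
it has 4 vertices, is a clique, and is closed under adjacency. -/
def IsK4Component {V : Type*} (G : SimpleGraph V) (S : Finset V) : Prop :=
  S.card = 4 ∧ (∀ u ∈ S, ∀ v ∈ S, u ≠ v → G.Adj u v) ∧ (∀ u ∈ S, ∀ v, G.Adj u v → v ∈ S)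

section aux

set_option linter.unusedSectionVars false

variable {V : Type*} [Fintype V] [DecidableEq V] (G : SimpleGraph V) [DecidableRel G.Adj]
  (S : Finset V)

instance : DecidableRel (G.induce (S : Set V)).Adj := fun u v =>
  decidable_of_iff (G.Adj ↑u ↑v) Iff.rfl

lemma edgesIn_eq_induce : edgesIn G S = (G.induce (S : Set V)).edgeFinset.card := by
  classical
  have hset : {e : Sym2 V | e ∈ G.edgeSet ∧ ∀ v ∈ e, v ∈ S} =
      Sym2.map (fun x : (S : Set V) => (x : V)) '' (G.induce (S : Set V)).edgeSet := by
    ext e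
    induction e with
    | _ a b =>
      simp only [Set.mem_setOf_eq, Set.mem_image, SimpleGraph.mem_edgeSet, Sym2.forall_mem_pair]
      constructor
      · rintro ⟨hab, ha, hb⟩
        exact ⟨s(⟨a, ha⟩, ⟨b, hb⟩), by simpa using hab, by simp⟩
      · rintro ⟨e', he', hmap⟩
        induction e' with
        | _ u v =>
          simp only [Sym2.map_pair_eq, Sym2.eq, Sym2.rel_iff', Prod.mk.injEq] at hmap
          have hadj : G.Adj ↑u ↑v := by simpa using he'
          rcases hmap with ⟨rfl, rfl⟩ | ⟨rfl, rfl⟩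
          · exact ⟨hadj, u.2, v.2⟩
          · exact ⟨hadj.symm, v.2, u.2⟩
  rw [edgesIn, hset, Set.ncard_image_of_injective _
    (Sym2.map.injective (Subtype.val_injective (p := fun x => x ∈ (S : Set V)))),
    Set.ncard_eq_toFinset_card']
  congr 1

lemma degree_induce_le (v : (S : Set V)) :
    (G.induce (S : Set V)).degree v ≤ G.degree ↑v := by
  classical
  apply Finset.card_le_card_of_injOn (Subtype.val)
  · intro u hu
    simp only [Finset.mem_coe, SimpleGraph.mem_neighborFinset] at hu ⊢
    simpa using hu
  · exact Subtype.val_injective.injOn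

lemma edgesIn_le_choose : edgesIn G S ≤ S.card.choose 2 := by
  rw [edgesIn_eq_induce]
  simpa [Fintype.card_coe] using
    (G.induce (S : Set V)).card_edgeFinset_le_card_choose_two

lemma two_edgesIn_le' (hcubic : ∀ v : V, G.degree v = 3) :
    2 * edgesIn G S ≤ 3 * S.card := by
  rw [edgesIn_eq_induce]
  rw [← (G.induce (S : Set V)).sum_degrees_eq_twice_card_edges]
  calc ∑ v, (G.induce (S : Set V)).degree v ≤ ∑ _v : (S : Set V), 3 := by
        apply Finset.sum_le_sum
        intro i _
        calc (G.induce (S : Set V)).degree i ≤ G.degree ↑i := degree_induce_le G S i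
          _ = 3 := hcubic ↑i
    _ = 3 * S.card := by simp [Fintype.card_coe, mul_comm]

lemma K4_of_six (hcubic : ∀ v : V, G.degree v = 3) (hc : S.card = 4)
    (hE : edgesIn G S = 6) : IsK4Component G S := by
  have hcard : Fintype.card (S : Set V) = 4 := by simp [hc]
  have htop : (G.induce (S : Set V)).edgeFinset = (⊤ : SimpleGraph (S : Set V)).edgeFinset := by
    refine Finset.eq_of_subset_of_card_le (SimpleGraph.edgeFinset_mono le_top) ?_
    rw [SimpleGraph.card_edgeFinset_top_eq_card_choose_two, hcard, ← edgesIn_eq_induce, hE]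
    norm_num [Nat.choose]
  have hclique : ∀ u ∈ S, ∀ v ∈ S, u ≠ v → G.Adj u v := by
    intro u hu v hv huv
    have hmem : s((⟨u, hu⟩ : (S : Set V)), (⟨v, hv⟩ : (S : Set V))) ∈
        (⊤ : SimpleGraph (S : Set V)).edgeFinset := by
      rw [SimpleGraph.mem_edgeFinset, SimpleGraph.mem_edgeSet]
      exact fun h => huv (congrArg Subtype.val h)
    rw [← htop, SimpleGraph.mem_edgeFinset, SimpleGraph.mem_edgeSet] at hmem
    exact hmem
  refine ⟨hc, hclique, ?_⟩
  intro u hu w hw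
  have hsub : S.erase u ⊆ G.neighborFinset u := by
    intro x hx
    rw [SimpleGraph.mem_neighborFinset]
    exact hclique u hu x (Finset.mem_of_mem_erase hx) (fun h => (Finset.ne_of_mem_erase hx) h.symm)
  have heq : S.erase u = G.neighborFinset u := by
    apply Finset.eq_of_subset_of_card_le hsub
    rw [SimpleGraph.card_neighborFinset_eq_degree, hcubic, Finset.card_erase_of_mem hu, hc]
  have : w ∈ G.neighborFinset u := by rw [SimpleGraph.mem_neighborFinset]; exact hw
  rw [← heq] at this
  exact Finset.mem_of_mem_erase this

lemma main_bound (hcubic : ∀ v : V, G.degree v = 3)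
    (hK4 : ¬ ∃ S : Finset V, IsK4Component G S) :
    3 * edgesIn G S ≤ S.card ^ 2 := by
  have h2 := two_edgesIn_le' G S hcubic
  have hch := edgesIn_le_choose G S
  set E := edgesIn G S with hE
  set n := S.card with hn
  rcases lt_or_ge n 4 with h | h
  · interval_cases n <;> simp [Nat.choose] at hch <;> nlinarith
  · rcases eq_or_lt_of_le h with h4 | h5
    · -- n = 4
      have hE5 : E ≤ 5 := by
        rcases Nat.lt_or_ge E 6 with h' | h'
        · omega
        · exfalso
          have hE6 : E = 6 := by
            have : E ≤ 6 := by rw [← h4] at hch; simpa [Nat.choose] using hch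
            omega
          exact hK4 ⟨S, K4_of_six G S hcubic h4.symm hE6⟩
      nlinarith
    · nlinarith

end aux

theorem stmt4 {V : Type*} [Fintype V] [DecidableEq V] (G : SimpleGraph V) [DecidableRel G.Adj]
    (hcubic : ∀ v : V, G.degree v = 3)
    (hK4 : ¬ ∃ S : Finset V, IsK4Component G S) :
    (∀ S : Finset V, S.Nonempty → 3 * edgesIn G S ≤ S.card ^ 2) ∧
      (∀ P : Finpartition (univ : Finset V), ∀ p ∈ P.parts, ∀ v ∈ p,
        utility G p ≤ 1 / 3) := by
  refine ⟨fun S _ => main_bound G S hcubic hK4, ?_⟩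
  intro P p hp v hv
  have h := main_bound G p hcubic hK4
  have hpos : (0 : ℚ) < (p.card : ℚ) ^ 2 := by
    have : 0 < p.card := Finset.card_pos.mpr ⟨v, hv⟩
    positivity
  rw [utility, div_le_div_iff₀ hpos (by norm_num)]
  have h' : (3 * edgesIn G p : ℚ) ≤ ((p.card : ℚ)) ^ 2 := by exact_mod_cast h
  push_cast at h' ⊢
  linarith
end

section
/- Let G = (V,E) be a cubic graph with no connected component whose induced subgraph is isomorphic to K4, and let v_1, v_2, v_3, v_4 be four vertices of G inducing a diamond. Then for every partition 𝒫 of V, u_𝒫(v_1) + u_𝒫(v_2) + u_𝒫(v_3) + u_𝒫(v_4) ≤ 5/4. -/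
open Finset

/-- The diamond graph: `K₄` minus the edge `{0,1}`. -/
def diamondGraph : SimpleGraph (Fin 4) :=
  SimpleGraph.fromEdgeSet {s(0, 2), s(0, 3), s(1, 2), s(1, 3), s(2, 3)}


set_option linter.unusedSectionVars false
set_option maxHeartbeats 1000000

section Aux

variable {V : Type*} [Fintype V] [DecidableEq V] (G : SimpleGraph V) [DecidableRel G.Adj]

open Classical in

lemma edgesIn_eq_card (S : Finset V) :
    edgesIn G S = (G.edgeFinset.filter (fun e => ∀ v ∈ e, v ∈ S)).card := by
  rw [edgesIn, ← Set.ncard_coe_finset]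
  congr 1
  ext e
  simp [SimpleGraph.mem_edgeFinset]

lemma handshake (S : Finset V) :
    2 * edgesIn G S = ∑ v ∈ S, (S.filter (G.Adj v)).card := by
  classical
  set G' : SimpleGraph ↥(S : Set V) := G.induce (S : Set V) with hG'
  have hdr : DecidableRel G'.Adj := Classical.decRel _
  have hhs := @SimpleGraph.sum_degrees_eq_twice_card_edges _ G' _ hdr
  have hedge : (@SimpleGraph.edgeFinset _ G' (@SimpleGraph.fintypeEdgeSet _ G' _ hdr)).card
      = edgesIn G S := by
    rw [edgesIn_eq_card]
    apply Finset.card_bij (fun e _ => Sym2.map Subtype.val e)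
    · intro e he
      induction e with
      | _ a b =>
        simp only [SimpleGraph.mem_edgeFinset, SimpleGraph.mem_edgeSet] at he ⊢
        simp only [Sym2.map_pair_eq, Finset.mem_filter, SimpleGraph.mem_edgeFinset,
          SimpleGraph.mem_edgeSet]
        refine ⟨he, ?_⟩
        intro v hv
        rcases Sym2.mem_iff.mp hv with rfl | rfl
        · exact a.2
        · exact b.2
    · intro e₁ h₁ e₂ h₂ hee
      exact Sym2.map.injective Subtype.val_injective hee
    · intro e he
      simp only [Finset.mem_filter, SimpleGraph.mem_edgeFinset, SimpleGraph.mem_edgeSet] at he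
      induction e with
      | _ a b =>
        obtain ⟨hab, hmem⟩ := he
        have ha : a ∈ S := hmem a (Sym2.mem_mk_left a b)
        have hb : b ∈ S := hmem b (Sym2.mem_mk_right a b)
        refine ⟨s(⟨a, ha⟩, ⟨b, hb⟩), ?_, rfl⟩
        simpa [SimpleGraph.mem_edgeFinset, hG'] using hab
  have hdeg : ∀ v : ↥(S : Set V), @SimpleGraph.degree _ G' v (SimpleGraph.neighborSetFintype G' v)
      = (S.filter (G.Adj ↑v)).card := by
    intro v
    rw [SimpleGraph.degree]
    apply Finset.card_bij (fun (u : ↥(S : Set V)) (_ : u ∈ G'.neighborFinset v) => (u : V))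
    · intro u hu
      simp only [SimpleGraph.mem_neighborFinset] at hu
      simp only [Finset.mem_filter]
      exact ⟨u.2, hu⟩
    · intro u₁ h₁ u₂ h₂ h
      exact Subtype.val_injective h
    · intro u hu
      simp only [Finset.mem_filter] at hu
      exact ⟨⟨u, hu.1⟩, by simpa [SimpleGraph.mem_neighborFinset, hG'] using hu.2, rfl⟩
  rw [show (∑ v ∈ S, (S.filter (G.Adj v)).card)
      = ∑ v : ↥(S : Set V), (S.filter (G.Adj ↑v)).card from
    Finset.sum_subtype S (fun x => Iff.symm Finset.mem_coe) _]
  rw [← hedge]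
  rw [← hhs]
  exact Finset.sum_congr rfl (fun v _ => hdeg v)

lemma nd_le_deg (S : Finset V) (v : V) : (S.filter (G.Adj v)).card ≤ G.degree v := by
  rw [SimpleGraph.degree]
  apply Finset.card_le_card
  intro u hu
  simp only [Finset.mem_filter] at hu
  simpa [SimpleGraph.mem_neighborFinset] using hu.2

lemma filter_adj_subset_erase (S : Finset V) (v : V) :
    S.filter (G.Adj v) ⊆ S.erase v := by
  intro u hu
  simp only [Finset.mem_filter] at hu
  exact Finset.mem_erase.mpr ⟨fun h => G.irrefl (h ▸ hu.2), hu.1⟩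

lemma nd_le_pred (S : Finset V) (v : V) (hv : v ∈ S) : (S.filter (G.Adj v)).card ≤ S.card - 1 := by
  calc (S.filter (G.Adj v)).card ≤ (S.erase v).card :=
        Finset.card_le_card (filter_adj_subset_erase G S v)
    _ = S.card - 1 := Finset.card_erase_of_mem hv

lemma utility_nonneg (S : Finset V) : 0 ≤ utility G S := by
  rw [utility]; positivity

lemma utility_le_helper (Q : Finset V) (a b : ℚ) (hb : 0 < b) (hn : Q.card ≠ 0)
    (h : b * (edgesIn G Q : ℚ) ≤ a * ((Q.card : ℚ))^2) : utility G Q ≤ a / b := by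
  rw [utility, div_le_div_iff₀ (by positivity) hb]
  linarith

lemma utility_le_of_nat (Q : Finset V) (a b : ℕ) (hb : 0 < b) (hn : Q.card ≠ 0)
    (h : b * edgesIn G Q ≤ a * Q.card^2) : utility G Q ≤ (a : ℚ) / (b : ℚ) := by
  apply utility_le_helper G Q _ _ (by exact_mod_cast hb) hn
  exact_mod_cast h

lemma sum_nd_eq (Q : Finset V) (c : ℕ) (hle : ∀ v ∈ Q, (Q.filter (G.Adj v)).card ≤ c)
    (hsum : 2 * edgesIn G Q = c * Q.card) :
    ∀ v ∈ Q, (Q.filter (G.Adj v)).card = c := by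
  intro v hv
  by_contra hne
  have hlt : (Q.filter (G.Adj v)).card < c := lt_of_le_of_ne (hle v hv) hne
  have : ∑ u ∈ Q, (Q.filter (G.Adj u)).card < ∑ u ∈ Q, c :=
    Finset.sum_lt_sum (fun u hu => hle u hu) ⟨v, hv, hlt⟩
  rw [Finset.sum_const, smul_eq_mul, mul_comm] at this
  rw [handshake] at hsum
  omega

lemma part_main_bound (hcubic : ∀ v : V, G.degree v = 3)
    (hK4 : ¬ ∃ S : Finset V, IsK4Component G S) (Q : Finset V) :
    utility G Q ≤ 5/16 ∨
      (Q.card = 3 ∧ edgesIn G Q = 3 ∧ ∀ u ∈ Q, ∀ v ∈ Q, u ≠ v → G.Adj u v) := by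
  rcases Nat.eq_zero_or_pos Q.card with h0 | hpos
  · left
    rw [show (5:ℚ)/16 = utility G Q + 5/16 - utility G Q by ring]
    have : utility G Q = 0 := by
      rw [utility, h0]; simp
    rw [this]; norm_num
  set n := Q.card with hn
  set e := edgesIn G Q with he
  have h2 : 2 * e = ∑ v ∈ Q, (Q.filter (G.Adj v)).card := handshake G Q
  have hb3 : 2 * e ≤ 3 * n := by
    rw [h2, hn]
    calc ∑ v ∈ Q, (Q.filter (G.Adj v)).card ≤ ∑ v ∈ Q, 3 :=
          Finset.sum_le_sum (fun v hv => (nd_le_deg G Q v).trans (le_of_eq (hcubic v)))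
      _ = 3 * Q.card := by rw [Finset.sum_const, smul_eq_mul, mul_comm]
  have hbn : 2 * e ≤ n * (n - 1) := by
    rw [h2, hn]
    calc ∑ v ∈ Q, (Q.filter (G.Adj v)).card ≤ ∑ v ∈ Q, (Q.card - 1) :=
          Finset.sum_le_sum (fun v hv => nd_le_pred G Q v hv)
      _ = Q.card * (Q.card - 1) := by rw [Finset.sum_const, smul_eq_mul]
  -- triangle case
  by_cases h3 : n = 3 ∧ e = 3
  · right
    refine ⟨h3.1, h3.2, ?_⟩
    have hall : ∀ v ∈ Q, (Q.filter (G.Adj v)).card = 2 := by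
      apply sum_nd_eq
      · intro v hv
        have := nd_le_pred G Q v hv
        omega
      · rw [← he, ← hn]; omega
    intro u hu v hv huv
    have hfe : Q.filter (G.Adj v) = Q.erase v := by
      apply Finset.eq_of_subset_of_card_le (filter_adj_subset_erase G Q v)
      rw [Finset.card_erase_of_mem hv, hall v hv, ← hn, h3.1]
    have : u ∈ Q.filter (G.Adj v) := by
      rw [hfe]; exact Finset.mem_erase.mpr ⟨huv, hu⟩
    exact ((Finset.mem_filter.mp this).2).symm
  -- K4 exclusion
  have hK4' : ¬ (n = 4 ∧ e = 6) := by
    rintro ⟨hn4, he6⟩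
    apply hK4
    refine ⟨Q, hn4, ?_, ?_⟩
    · have hall : ∀ v ∈ Q, (Q.filter (G.Adj v)).card = 3 := by
        apply sum_nd_eq
        · intro v hv
          exact (nd_le_deg G Q v).trans (le_of_eq (hcubic v))
        · rw [← he, ← hn]; omega
      intro u hu v hv huv
      have hfe : Q.filter (G.Adj v) = Q.erase v := by
        apply Finset.eq_of_subset_of_card_le (filter_adj_subset_erase G Q v)
        rw [Finset.card_erase_of_mem hv, hall v hv, ← hn, hn4]
      have : u ∈ Q.filter (G.Adj v) := by
        rw [hfe]; exact Finset.mem_erase.mpr ⟨huv, hu⟩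
      exact ((Finset.mem_filter.mp this).2).symm
    · -- closed under adjacency
      have hall : ∀ v ∈ Q, (Q.filter (G.Adj v)).card = 3 := by
        apply sum_nd_eq
        · intro v hv
          exact (nd_le_deg G Q v).trans (le_of_eq (hcubic v))
        · rw [← he, ← hn]; omega
      intro u hu v hadj
      have hfe : Q.filter (G.Adj u) = G.neighborFinset u := by
        apply Finset.eq_of_subset_of_card_le
        · intro w hw
          simp only [Finset.mem_filter] at hw
          simpa [SimpleGraph.mem_neighborFinset] using hw.2
        · rw [hall u hu]
          have : (G.neighborFinset u).card = G.degree u := rfl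
          rw [this, hcubic u]
      have : v ∈ G.neighborFinset u := by simpa [SimpleGraph.mem_neighborFinset] using hadj
      rw [← hfe] at this
      exact (Finset.mem_filter.mp this).1
  -- numeric case
  left
  have key : 16 * e ≤ 5 * n^2 := by
    rcases lt_or_ge n 5 with h5 | h5
    · interval_cases n <;> omega
    · nlinarith
  rw [show (5:ℚ)/16 = (5:ℕ)/(16:ℕ) by norm_num]
  exact utility_le_of_nat G Q 5 16 (by norm_num) (by omega) (by rw [← he, ← hn]; exact key)

lemma part_quarter_bound (hcubic : ∀ v : V, G.degree v = 3) (Q : Finset V) (d0 : V)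
    (hd : d0 ∈ Q) (h1 : (Q.filter (G.Adj d0)).card ≤ 1) : utility G Q ≤ 1/4 := by
  set n := Q.card with hn
  set e := edgesIn G Q with he
  have hpos : 0 < n := Finset.card_pos.mpr ⟨d0, hd⟩
  have h2 : 2 * e = ∑ v ∈ Q, (Q.filter (G.Adj v)).card := handshake G Q
  have hsplit : ∑ v ∈ Q, (Q.filter (G.Adj v)).card
      = (Q.filter (G.Adj d0)).card + ∑ v ∈ Q.erase d0, (Q.filter (G.Adj v)).card :=
    (Finset.add_sum_erase Q _ hd).symm
  -- bound each term over the erase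
  have hterm : ∀ v ∈ Q.erase d0, (Q.filter (G.Adj v)).card
      ≤ ((Q.erase d0).filter (G.Adj v)).card + (if G.Adj d0 v then 1 else 0) := by
    intro v hv
    have hQ : Q = insert d0 (Q.erase d0) := (Finset.insert_erase hd).symm
    conv_lhs => rw [hQ]
    rw [Finset.filter_insert]
    by_cases hadj : G.Adj v d0
    · rw [if_pos hadj, if_pos (G.adj_symm hadj)]
      exact (Finset.card_insert_le _ _).trans (by omega)
    · rw [if_neg hadj, if_neg (fun h => hadj (G.adj_symm h))]
      omega
  have hsum_ite : ∑ v ∈ Q.erase d0, (if G.Adj d0 v then 1 else 0)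
      ≤ 1 := by
    have : ∑ v ∈ Q.erase d0, (if G.Adj d0 v then 1 else 0)
        = ((Q.erase d0).filter (G.Adj d0)).card := (Finset.card_filter _ _).symm
    rw [this]
    calc ((Q.erase d0).filter (G.Adj d0)).card ≤ (Q.filter (G.Adj d0)).card :=
          Finset.card_le_card (Finset.filter_subset_filter _ (Finset.erase_subset _ _))
      _ ≤ 1 := h1
  have hB1 : 2 * e ≤ 2 + (n - 1) * (n - 2) := by
    rw [h2, hsplit]
    have : ∑ v ∈ Q.erase d0, (Q.filter (G.Adj v)).card
        ≤ ∑ v ∈ Q.erase d0, (((Q.erase d0).filter (G.Adj v)).card + (if G.Adj d0 v then 1 else 0)) :=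
      Finset.sum_le_sum hterm
    rw [Finset.sum_add_distrib] at this
    have h1' : ∑ v ∈ Q.erase d0, ((Q.erase d0).filter (G.Adj v)).card
        ≤ (n - 1) * (n - 2) := by
      calc ∑ v ∈ Q.erase d0, ((Q.erase d0).filter (G.Adj v)).card
          ≤ ∑ v ∈ Q.erase d0, ((Q.erase d0).card - 1) :=
            Finset.sum_le_sum (fun v hv => nd_le_pred G _ v hv)
        _ = (Q.erase d0).card * ((Q.erase d0).card - 1) := by
            rw [Finset.sum_const, smul_eq_mul]
        _ = (n - 1) * (n - 2) := by
            rw [Finset.card_erase_of_mem hd, ← hn]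
            rfl
    omega
  have hB2 : 2 * e ≤ 1 + 3 * (n - 1) := by
    rw [h2, hsplit]
    have : ∑ v ∈ Q.erase d0, (Q.filter (G.Adj v)).card ≤ ∑ v ∈ Q.erase d0, 3 :=
      Finset.sum_le_sum (fun v hv => (nd_le_deg G Q v).trans (le_of_eq (hcubic v)))
    rw [Finset.sum_const, smul_eq_mul, Finset.card_erase_of_mem hd] at this
    omega
  have key : 4 * e ≤ n ^ 2 := by
    have hB2' : 2 * e + 2 ≤ 3 * n := by omega
    rcases lt_or_ge n 6 with h6 | h6
    · interval_cases n <;> omega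
    · have hsq : 6 * n ≤ n ^ 2 := by nlinarith
      linarith
  rw [show (1:ℚ)/4 = (1:ℕ)/(4:ℕ) by norm_num]
  exact utility_le_of_nat G Q 1 4 (by norm_num) (by omega) (by rw [← he, ← hn]; omega)

lemma utility_le_third (Q : Finset V) (h3 : Q.card = 3) : utility G Q ≤ 1/3 := by
  have h2 : 2 * edgesIn G Q = ∑ v ∈ Q, (Q.filter (G.Adj v)).card := handshake G Q
  have hb : 2 * edgesIn G Q ≤ 6 := by
    rw [h2]
    calc ∑ v ∈ Q, (Q.filter (G.Adj v)).card ≤ ∑ v ∈ Q, (Q.card - 1) :=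
          Finset.sum_le_sum (fun v hv => nd_le_pred G Q v hv)
      _ = Q.card * (Q.card - 1) := by rw [Finset.sum_const, smul_eq_mul]
      _ = 6 := by rw [h3]
  rw [show (1:ℚ)/3 = (3:ℕ)/(9:ℕ) by norm_num]
  exact utility_le_of_nat G Q 3 9 (by norm_num) (by omega) (by rw [h3]; omega)

lemma aux_hub (Q : Finset V) (h3 : Q.card = 3)
    (hadj : ∀ u ∈ Q, ∀ v ∈ Q, u ≠ v → G.Adj u v)
    (g h c1 c2 : V) (hg : g ∈ Q)
    (Ng : G.neighborFinset g = {h, c1, c2}) (nac : ¬ G.Adj c1 c2) :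
    Q = {g, h, c1} ∨ Q = {g, h, c2} := by
  have hc : (Q.erase g).card = 2 := by rw [Finset.card_erase_of_mem hg, h3]
  obtain ⟨p, q, hpq, hE⟩ := Finset.card_eq_two.mp hc
  have hp : p ∈ Q.erase g := by rw [hE]; simp
  have hq : q ∈ Q.erase g := by rw [hE]; simp
  obtain ⟨hpg, hpQ⟩ := Finset.mem_erase.mp hp
  obtain ⟨hqg, hqQ⟩ := Finset.mem_erase.mp hq
  have hQeq : Q = insert g {p, q} := by rw [← hE, Finset.insert_erase hg]
  have hpN : p ∈ G.neighborFinset g := by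
    rw [SimpleGraph.mem_neighborFinset]; exact hadj g hg p hpQ (Ne.symm hpg)
  have hqN : q ∈ G.neighborFinset g := by
    rw [SimpleGraph.mem_neighborFinset]; exact hadj g hg q hqQ (Ne.symm hqg)
  have hApq : G.Adj p q := hadj p hpQ q hqQ hpq
  rw [Ng] at hpN hqN
  simp only [Finset.mem_insert, Finset.mem_singleton] at hpN hqN
  rcases hpN with rfl | rfl | rfl <;> rcases hqN with rfl | rfl | rfl
  · exact absurd rfl hpq
  · left; rw [hQeq]
  · right; rw [hQeq]
  · left; rw [hQeq, Finset.pair_comm]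
  · exact absurd rfl hpq
  · exact absurd hApq nac
  · right; rw [hQeq, Finset.pair_comm]
  · exact absurd (G.adj_symm hApq) nac
  · exact absurd rfl hpq

lemma aux_c (Q : Finset V) (h3 : Q.card = 3)
    (hadj : ∀ u ∈ Q, ∀ v ∈ Q, u ≠ v → G.Adj u v)
    (c g h : V) (hc : c ∈ Q)
    (hb : (((G.neighborFinset c).erase g).erase h).card ≤ 1) :
    g ∈ Q ∨ h ∈ Q := by
  by_contra hcon
  push_neg at hcon
  obtain ⟨hgQ, hhQ⟩ := hcon
  have hcard : (Q.erase c).card = 2 := by rw [Finset.card_erase_of_mem hc, h3]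
  obtain ⟨p, q, hpq, hE⟩ := Finset.card_eq_two.mp hcard
  have hsub : ({p, q} : Finset V) ⊆ ((G.neighborFinset c).erase g).erase h := by
    intro x hx
    have hxQ : x ∈ Q.erase c := by rw [hE]; exact hx
    obtain ⟨hxc, hxQ'⟩ := Finset.mem_erase.mp hxQ
    refine Finset.mem_erase.mpr ⟨fun hxh => hhQ (hxh ▸ hxQ'), ?_⟩
    refine Finset.mem_erase.mpr ⟨fun hxg => hgQ (hxg ▸ hxQ'), ?_⟩
    rw [SimpleGraph.mem_neighborFinset]
    exact hadj c hc x hxQ' (Ne.symm hxc)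
  have : ({p, q} : Finset V).card ≤ 1 := le_trans (Finset.card_le_card hsub) hb
  rw [Finset.card_insert_of_notMem (by simpa using hpq), Finset.card_singleton] at this
  omega

lemma tri_class (Q : Finset V) (h3 : Q.card = 3)
    (hadj : ∀ u ∈ Q, ∀ v ∈ Q, u ≠ v → G.Adj u v)
    (g h c1 c2 : V)
    (Ng : G.neighborFinset g = {h, c1, c2}) (Nh : G.neighborFinset h = {g, c1, c2})
    (nac : ¬ G.Adj c1 c2)
    (hb1 : (((G.neighborFinset c1).erase g).erase h).card ≤ 1)
    (hb2 : (((G.neighborFinset c2).erase g).erase h).card ≤ 1)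
    (hmem : g ∈ Q ∨ h ∈ Q ∨ c1 ∈ Q ∨ c2 ∈ Q) :
    Q = {g, h, c1} ∨ Q = {g, h, c2} := by
  have hubg : g ∈ Q → Q = {g, h, c1} ∨ Q = {g, h, c2} := fun hg =>
    aux_hub G Q h3 hadj g h c1 c2 hg Ng nac
  have hubh : h ∈ Q → Q = {g, h, c1} ∨ Q = {g, h, c2} := by
    intro hh
    rcases aux_hub G Q h3 hadj h g c1 c2 hh Nh nac with hc | hc
    · left; rw [hc]; ext x; simp; tauto
    · right; rw [hc]; ext x; simp; tauto
  rcases hmem with hg | hh | hc1 | hc2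
  · exact hubg hg
  · exact hubh hh
  · rcases aux_c G Q h3 hadj c1 g h hc1 hb1 with hg | hh
    · exact hubg hg
    · exact hubh hh
  · rcases aux_c G Q h3 hadj c2 g h hc2 hb2 with hg | hh
    · exact hubg hg
    · exact hubh hh

lemma end_lemma (hcubic : ∀ v : V, G.degree v = 3)
    (P : Finpartition (univ : Finset V))
    (Qg Qh Q1 Q2 : Finset V) (g h c1 c2 : V)
    (hQg : Qg ∈ P.parts) (hgm : g ∈ Qg)
    (hQh : Qh ∈ P.parts) (hhm : h ∈ Qh)
    (hQ1 : Q1 ∈ P.parts) (h1m : c1 ∈ Q1)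
    (hQ2 : Q2 ∈ P.parts) (h2m : c2 ∈ Q2)
    (hgh : g ≠ h) (hgc1 : g ≠ c1) (hhc1 : h ≠ c1)
    (hc2g : c2 ≠ g) (hc2h : c2 ≠ h) (hc2c1 : c2 ≠ c1)
    (ac2g : G.Adj c2 g) (ac2h : G.Adj c2 h)
    (hT : Qg = {g, h, c1}) :
    utility G Qg + utility G Qh + utility G Q1 + utility G Q2 ≤ 5/4 := by
  have hhg : h ∈ Qg := by rw [hT]; simp
  have hc1g : c1 ∈ Qg := by rw [hT]; simp
  have hQhg : Qh = Qg := P.eq_of_mem_parts hQh hQg hhm hhg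
  have hQ1g : Q1 = Qg := P.eq_of_mem_parts hQ1 hQg h1m hc1g
  have hc2ng : c2 ∉ Qg := by
    rw [hT]; simp [hc2g, hc2h, hc2c1]
  have hQ2ne : Q2 ≠ Qg := fun hcon => hc2ng (hcon ▸ h2m)
  have hgn2 : g ∉ Q2 := fun hcon => hQ2ne (P.eq_of_mem_parts hQ2 hQg hcon hgm)
  have hhn2 : h ∉ Q2 := fun hcon => hQ2ne (P.eq_of_mem_parts hQ2 hQg hcon hhg)
  have hfilter : (Q2.filter (G.Adj c2)).card ≤ 1 := by
    have hsub : Q2.filter (G.Adj c2) ⊆ ((G.neighborFinset c2).erase g).erase h := by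
      intro x hx
      obtain ⟨hxQ, hxa⟩ := Finset.mem_filter.mp hx
      refine Finset.mem_erase.mpr ⟨fun hxh => hhn2 (hxh ▸ hxQ), ?_⟩
      refine Finset.mem_erase.mpr ⟨fun hxg => hgn2 (hxg ▸ hxQ), ?_⟩
      rwa [SimpleGraph.mem_neighborFinset]
    have hcard : (((G.neighborFinset c2).erase g).erase h).card = 1 := by
      have hd : (G.neighborFinset c2).card = 3 := hcubic c2
      have hgm' : g ∈ G.neighborFinset c2 := by
        rwa [SimpleGraph.mem_neighborFinset]
      have hhm' : h ∈ (G.neighborFinset c2).erase g :=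
        Finset.mem_erase.mpr ⟨Ne.symm hgh, by rwa [SimpleGraph.mem_neighborFinset]⟩
      rw [Finset.card_erase_of_mem hhm', Finset.card_erase_of_mem hgm']
      have hd' : (G.neighborFinset c2).card = 3 := hcubic c2
      omega
    exact (Finset.card_le_card hsub).trans (le_of_eq hcard)
  have hu2 : utility G Q2 ≤ 1/4 := part_quarter_bound G hcubic Q2 c2 h2m hfilter
  have hug : utility G Qg ≤ 1/3 := by
    apply utility_le_third
    rw [hT, Finset.card_insert_of_notMem (by simp [hgh, hgc1]),
      Finset.card_insert_of_notMem (by simp [hhc1]), Finset.card_singleton]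
  rw [hQhg, hQ1g]
  linarith

lemma main_lemma (hcubic : ∀ v : V, G.degree v = 3)
    (hK4 : ¬ ∃ S : Finset V, IsK4Component G S)
    (P : Finpartition (univ : Finset V))
    (g h c1 c2 : V)
    (hgh : g ≠ h) (hgc1 : g ≠ c1) (hgc2 : g ≠ c2)
    (hhc1 : h ≠ c1) (hhc2 : h ≠ c2) (hc12 : c1 ≠ c2)
    (agh : G.Adj g h) (agc1 : G.Adj g c1) (agc2 : G.Adj g c2)
    (ahc1 : G.Adj h c1) (ahc2 : G.Adj h c2) (nac : ¬ G.Adj c1 c2)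
    (Qg Qh Q1 Q2 : Finset V)
    (hQg : Qg ∈ P.parts) (hgm : g ∈ Qg)
    (hQh : Qh ∈ P.parts) (hhm : h ∈ Qh)
    (hQ1 : Q1 ∈ P.parts) (h1m : c1 ∈ Q1)
    (hQ2 : Q2 ∈ P.parts) (h2m : c2 ∈ Q2) :
    utility G Qg + utility G Qh + utility G Q1 + utility G Q2 ≤ 5/4 := by
  -- neighborhood facts
  have Ng : G.neighborFinset g = {h, c1, c2} := by
    symm
    apply Finset.eq_of_subset_of_card_le
    · intro x hx
      simp only [Finset.mem_insert, Finset.mem_singleton] at hx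
      rw [SimpleGraph.mem_neighborFinset]
      rcases hx with rfl | rfl | rfl
      exacts [agh, agc1, agc2]
    · rw [show (G.neighborFinset g).card = 3 from hcubic g, Finset.card_insert_of_notMem (by simp [hhc1, hhc2]),
        Finset.card_insert_of_notMem (by simp [hc12]), Finset.card_singleton]
  have Nh : G.neighborFinset h = {g, c1, c2} := by
    symm
    apply Finset.eq_of_subset_of_card_le
    · intro x hx
      simp only [Finset.mem_insert, Finset.mem_singleton] at hx
      rw [SimpleGraph.mem_neighborFinset]
      rcases hx with rfl | rfl | rfl
      exacts [G.adj_symm agh, ahc1, ahc2]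
    · rw [show (G.neighborFinset h).card = 3 from hcubic h, Finset.card_insert_of_notMem (by simp [hgc1, hgc2]),
        Finset.card_insert_of_notMem (by simp [hc12]), Finset.card_singleton]
  have hb : ∀ c : V, G.Adj c g → G.Adj c h →
      (((G.neighborFinset c).erase g).erase h).card ≤ 1 := by
    intro c hag hah
    have hgm' : g ∈ G.neighborFinset c := by rwa [SimpleGraph.mem_neighborFinset]
    have hhm' : h ∈ (G.neighborFinset c).erase g :=
      Finset.mem_erase.mpr ⟨Ne.symm hgh, by rwa [SimpleGraph.mem_neighborFinset]⟩
    rw [Finset.card_erase_of_mem hhm', Finset.card_erase_of_mem hgm']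
    have : (G.neighborFinset c).card = 3 := hcubic c
    omega
  have hb1 := hb c1 (G.adj_symm agc1) (G.adj_symm ahc1)
  have hb2 := hb c2 (G.adj_symm agc2) (G.adj_symm ahc2)
  -- the bad-part handler
  have bad : ∀ Q ∈ P.parts, ¬ utility G Q ≤ 5/16 →
      (g ∈ Q ∨ h ∈ Q ∨ c1 ∈ Q ∨ c2 ∈ Q) →
      utility G Qg + utility G Qh + utility G Q1 + utility G Q2 ≤ 5/4 := by
    intro Q hQP hu hmem
    rcases part_main_bound G hcubic hK4 Q with hle | ⟨h3, _, hadj⟩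
    · exact absurd hle hu
    rcases tri_class G Q h3 hadj g h c1 c2 Ng Nh nac hb1 hb2 hmem with hT | hT
    · have hQg' : Qg = Q := P.eq_of_mem_parts hQg hQP hgm (by rw [hT]; simp)
      exact end_lemma G hcubic P Qg Qh Q1 Q2 g h c1 c2 hQg hgm hQh hhm hQ1 h1m hQ2 h2m
        hgh hgc1 hhc1 (Ne.symm hgc2) (Ne.symm hhc2) (Ne.symm hc12)
        (G.adj_symm agc2) (G.adj_symm ahc2) (by rw [hQg', hT])
    · have hQg' : Qg = Q := P.eq_of_mem_parts hQg hQP hgm (by rw [hT]; simp)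
      have := end_lemma G hcubic P Qg Qh Q2 Q1 g h c2 c1 hQg hgm hQh hhm hQ2 h2m hQ1 h1m
        hgh hgc2 hhc2 (Ne.symm hgc1) (Ne.symm hhc1) hc12
        (G.adj_symm agc1) (G.adj_symm ahc1) (by rw [hQg', hT])
      linarith
  by_cases hA : utility G Qg ≤ 5/16
  · by_cases hB : utility G Qh ≤ 5/16
    · by_cases hC : utility G Q1 ≤ 5/16
      · by_cases hD : utility G Q2 ≤ 5/16
        · linarith
        · exact bad Q2 hQ2 hD (Or.inr (Or.inr (Or.inr h2m)))
      · exact bad Q1 hQ1 hC (Or.inr (Or.inr (Or.inl h1m)))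
    · exact bad Qh hQh hB (Or.inr (Or.inl hhm))
  · exact bad Qg hQg hA (Or.inl hgm)

end Aux

theorem stmt6 {V : Type*} [Fintype V] [DecidableEq V] (G : SimpleGraph V) [DecidableRel G.Adj]
    (hcubic : ∀ v : V, G.degree v = 3)
    (hK4 : ¬ ∃ S : Finset V, IsK4Component G S)
    (v₁ v₂ v₃ v₄ : V)
    (hcard : ({v₁, v₂, v₃, v₄} : Finset V).card = 4)
    (hdiam : Nonempty (G.induce ({v₁, v₂, v₃, v₄} : Set V) ≃g diamondGraph))
    (P : Finpartition (univ : Finset V))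
    (P₁ P₂ P₃ P₄ : Finset V)
    (hP₁ : P₁ ∈ P.parts) (hv₁ : v₁ ∈ P₁)
    (hP₂ : P₂ ∈ P.parts) (hv₂ : v₂ ∈ P₂)
    (hP₃ : P₃ ∈ P.parts) (hv₃ : v₃ ∈ P₃)
    (hP₄ : P₄ ∈ P.parts) (hv₄ : v₄ ∈ P₄) :
    utility G P₁ + utility G P₂ + utility G P₃ + utility G P₄ ≤ 5 / 4 := by
  obtain ⟨e⟩ := hdiam
  set f := e.symm with hf
  have adj_iff : ∀ i j : Fin 4, diamondGraph.Adj i j ↔ G.Adj ↑(f i) ↑(f j) := by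
    intro i j
    rw [← SimpleGraph.Iso.map_adj_iff f]
    simp
  have d23 : diamondGraph.Adj 2 3 := by
    simp [diamondGraph, SimpleGraph.fromEdgeSet_adj, Set.mem_insert_iff]
  have d20 : diamondGraph.Adj 2 0 := by
    simp [diamondGraph, SimpleGraph.fromEdgeSet_adj, Set.mem_insert_iff, Sym2.eq_iff]
  have d21 : diamondGraph.Adj 2 1 := by
    simp [diamondGraph, SimpleGraph.fromEdgeSet_adj, Set.mem_insert_iff, Sym2.eq_iff]
  have d30 : diamondGraph.Adj 3 0 := by
    simp [diamondGraph, SimpleGraph.fromEdgeSet_adj, Set.mem_insert_iff, Sym2.eq_iff]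
  have d31 : diamondGraph.Adj 3 1 := by
    simp [diamondGraph, SimpleGraph.fromEdgeSet_adj, Set.mem_insert_iff, Sym2.eq_iff]
  have d01 : ¬ diamondGraph.Adj 0 1 := by
    simp [diamondGraph, SimpleGraph.fromEdgeSet_adj, Set.mem_insert_iff, Sym2.eq_iff]
  have hinj : ∀ i j : Fin 4, i ≠ j → (↑(f i) : V) ≠ ↑(f j) := by
    intro i j hij hcon
    exact hij (f.toEquiv.injective (Subtype.ext hcon))
  have hmem : ∀ i : Fin 4, (↑(f i) : V) ∈ ({v₁, v₂, v₃, v₄} : Finset V) := by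
    intro i
    have := (f i).2
    simp only [Set.mem_insert_iff, Set.mem_singleton_iff] at this
    simp only [Finset.mem_insert, Finset.mem_singleton]
    exact this
  set g : V := ↑(f 2) with hg
  set h : V := ↑(f 3) with hh
  set c1 : V := ↑(f 0) with hc1
  set c2 : V := ↑(f 1) with hc2
  have hgh : g ≠ h := hinj 2 3 (by decide)
  have hgc1 : g ≠ c1 := hinj 2 0 (by decide)
  have hgc2 : g ≠ c2 := hinj 2 1 (by decide)
  have hhc1 : h ≠ c1 := hinj 3 0 (by decide)
  have hhc2 : h ≠ c2 := hinj 3 1 (by decide)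
  have hc12 : c1 ≠ c2 := hinj 0 1 (by decide)
  have hcard' : ({g, h, c1, c2} : Finset V).card = 4 := by
    rw [Finset.card_insert_of_notMem (by simp [hgh, hgc1, hgc2]),
      Finset.card_insert_of_notMem (by simp [hhc1, hhc2]),
      Finset.card_insert_of_notMem (by simp [hc12]), Finset.card_singleton]
  have hset : ({v₁, v₂, v₃, v₄} : Finset V) = {g, h, c1, c2} := by
    symm
    apply Finset.eq_of_subset_of_card_le
    · intro x hx
      simp only [Finset.mem_insert, Finset.mem_singleton] at hx
      rcases hx with rfl | rfl | rfl | rfl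
      exacts [hmem 2, hmem 3, hmem 0, hmem 1]
    · rw [hcard, hcard']
  -- sum over four distinct elements
  have key4 : ∀ w x y z : V, ({w, x, y, z} : Finset V).card = 4 →
      ∑ v ∈ ({w, x, y, z} : Finset V), utility G (P.part v)
        = utility G (P.part w) + utility G (P.part x) + utility G (P.part y)
            + utility G (P.part z) := by
    intro w x y z hc
    have h1 := Finset.card_insert_le x ({y, z} : Finset V)
    have h2 := Finset.card_insert_le y ({z} : Finset V)
    have h3 := Finset.card_insert_le w ({x, y, z} : Finset V)
    rw [Finset.card_singleton] at h2
    have hw : w ∉ ({x, y, z} : Finset V) := by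
      intro hmem'
      rw [show ({w, x, y, z} : Finset V) = ({x, y, z} : Finset V) from
        Finset.insert_eq_self.mpr hmem'] at hc
      omega
    have hx : x ∉ ({y, z} : Finset V) := by
      intro hmem'
      rw [show ({x, y, z} : Finset V) = ({y, z} : Finset V) from
        Finset.insert_eq_self.mpr hmem'] at hc h3
      have h4 := Finset.card_insert_le w ({y, z} : Finset V)
      have h5 := Finset.card_insert_le y ({z} : Finset V)
      rw [Finset.card_singleton] at h5
      omega
    have hy : y ∉ ({z} : Finset V) := by
      intro hmem'
      rw [show ({y, z} : Finset V) = ({z} : Finset V) from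
        Finset.insert_eq_self.mpr hmem'] at hc h1
      have h4 := Finset.card_insert_le w ({x, z} : Finset V)
      have h5 := Finset.card_insert_le x ({z} : Finset V)
      rw [Finset.card_singleton] at h5
      omega
    rw [Finset.sum_insert hw, Finset.sum_insert hx, Finset.sum_insert hy,
      Finset.sum_singleton]
    ring
  have hP1 : utility G P₁ = utility G (P.part v₁) := by rw [P.part_eq_of_mem hP₁ hv₁]
  have hP2 : utility G P₂ = utility G (P.part v₂) := by rw [P.part_eq_of_mem hP₂ hv₂]
  have hP3 : utility G P₃ = utility G (P.part v₃) := by rw [P.part_eq_of_mem hP₃ hv₃]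
  have hP4 : utility G P₄ = utility G (P.part v₄) := by rw [P.part_eq_of_mem hP₄ hv₄]
  rw [hP1, hP2, hP3, hP4, ← key4 v₁ v₂ v₃ v₄ hcard, hset,
    key4 g h c1 c2 hcard']
  exact main_lemma G hcubic hK4 P g h c1 c2 hgh hgc1 hgc2 hhc1 hhc2 hc12
    ((adj_iff 2 3).mp d23) ((adj_iff 2 0).mp d20) ((adj_iff 2 1).mp d21)
    ((adj_iff 3 0).mp d30) ((adj_iff 3 1).mp d31)
    (fun hcon => d01 ((adj_iff 0 1).mpr hcon))
    (P.part g) (P.part h) (P.part c1) (P.part c2)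
    (P.part_mem.2 (Finset.mem_univ g)) (P.mem_part (Finset.mem_univ g))
    (P.part_mem.2 (Finset.mem_univ h)) (P.mem_part (Finset.mem_univ h))
    (P.part_mem.2 (Finset.mem_univ c1)) (P.mem_part (Finset.mem_univ c1))
    (P.part_mem.2 (Finset.mem_univ c2)) (P.mem_part (Finset.mem_univ c2))
end

section
/- Let X be a finite set with |X| = 3q for some q ≥ 1, and let C be a collection of 3-element subsets of X such that every element of X belongs to exactly 3 members of C. Let G = σ(X,C) be the graph with vertex set X ∪ {(c,x) : c ∈ C, x ∈ c} and edges {(c,x),(c,y)} for c ∈ C and distinct x, y ∈ c, together with {(c,x), x} for c ∈ C and x ∈ c. Then there exists a subcollection C' ⊆ C such that every element of X occurs in exactly one member of C' if and only if there exists a partition 𝒫 of V(G) with d(𝒫) ≥ 7·|X|/6. -/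
open Finset

/-- The graph `σ(X,C)`: type-1 vertices are elements `x` (as `Sum.inl x`), type-2 vertices
are pairs `(c, x)` with `x ∈ c ∈ C` (as `Sum.inr (c, x)`); the three type-2 vertices of each
`c ∈ C` form a triangle and each `(c, x)` is additionally adjacent to `x`. -/
def sigmaGraph {α : Type*} [DecidableEq α] (C : Finset (Finset α)) :
    SimpleGraph (α ⊕ Finset α × α) :=
  SimpleGraph.fromRel (fun u v =>
    match u, v with
    | .inr (c, x), .inr (c', y) => c = c' ∧ c ∈ C ∧ x ∈ c ∧ y ∈ c
    | .inl x, .inr (c, y) => c ∈ C ∧ y ∈ c ∧ x = y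
    | _, _ => False)

/-- The vertex set of `σ(X,C)`: `X ∪ {(c,x) : c ∈ C, x ∈ c}`. -/
def sigmaVerts {α : Type*} [DecidableEq α] (X : Finset α) (C : Finset (Finset α)) :
    Finset (α ⊕ Finset α × α) :=
  X.image Sum.inl ∪ C.biUnion fun c => c.image fun x => Sum.inr (c, x)

namespace St9

variable {α : Type*} [DecidableEq α]

/-- elements of `c` whose type-2 vertex for `c` lies in `S` -/
def sV (S : Finset (α ⊕ Finset α × α)) (c : Finset α) : Finset α :=
  c.filter fun x => Sum.inr (c, x) ∈ S

/-- elements of `c` giving a pendant edge inside `S` -/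
def pV (S : Finset (α ⊕ Finset α × α)) (c : Finset α) : Finset α :=
  c.filter fun x => Sum.inl x ∈ S ∧ Sum.inr (c, x) ∈ S

def triE (S : Finset (α ⊕ Finset α × α)) (c : Finset α) : Finset (Sym2 (α ⊕ Finset α × α)) :=
  ((sV S c).image fun x => (Sum.inr (c, x) : α ⊕ Finset α × α)).offDiag.image Sym2.mk.uncurry

def penE (S : Finset (α ⊕ Finset α × α)) (c : Finset α) : Finset (Sym2 (α ⊕ Finset α × α)) :=
  (pV S c).image fun x => s(Sum.inl x, (Sum.inr (c, x) : α ⊕ Finset α × α))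

def allE (C : Finset (Finset α)) (S : Finset (α ⊕ Finset α × α)) :
    Finset (Sym2 (α ⊕ Finset α × α)) :=
  C.biUnion fun c => triE S c ∪ penE S c

-- edge set description
lemma edgesIn_eq (C : Finset (Finset α)) (S : Finset (α ⊕ Finset α × α)) :
    edgesIn (sigmaGraph C) S = (allE C S).card := by
  have hset : {e : Sym2 (α ⊕ Finset α × α) | e ∈ (sigmaGraph C).edgeSet ∧ ∀ v ∈ e, v ∈ S}
      = ↑(allE C S) := by
    ext e
    induction e with
    | _ u v =>
      simp only [Set.mem_setOf_eq, SimpleGraph.mem_edgeSet, Finset.coe_mem, Finset.mem_coe]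
      constructor
      · rintro ⟨hadj, hmem⟩
        have hu : u ∈ S := hmem u (by simp)
        have hv : v ∈ S := hmem v (by simp)
        rw [sigmaGraph, SimpleGraph.fromRel_adj] at hadj
        obtain ⟨hne, hrel⟩ := hadj
        simp only [allE, Finset.mem_biUnion, Finset.mem_union]
        rcases hrel with h | h
        · rcases u with x | ⟨c, x⟩ <;> rcases v with y | ⟨c', y⟩
          · exact absurd h (by simp)
          · obtain ⟨hc, hy, rfl⟩ := h
            refine ⟨c', hc, Or.inr ?_⟩
            simp only [penE, Finset.mem_image]
            exact ⟨x, by simp [pV, Finset.mem_filter, hy, hu, hv], rfl⟩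
          · exact absurd h (by simp)
          · obtain ⟨rfl, hc, hx, hy⟩ := h
            refine ⟨c, hc, Or.inl ?_⟩
            simp only [triE, Finset.mem_image, Finset.mem_offDiag]
            refine ⟨(Sum.inr (c,x), Sum.inr (c,y)), ⟨?_, ?_, hne⟩, rfl⟩ <;>
              · simp only [Finset.mem_image, sV, Finset.mem_filter]
                first
                | exact ⟨x, ⟨hx, hu⟩, rfl⟩
                | exact ⟨y, ⟨hy, hv⟩, rfl⟩
        · rcases u with x | ⟨c, x⟩ <;> rcases v with y | ⟨c', y⟩
          · exact absurd h (by simp)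
          · exact absurd h (by simp)
          · obtain ⟨hc, hx, rfl⟩ := h
            refine ⟨c, hc, Or.inr ?_⟩
            simp only [penE, Finset.mem_image]
            exact ⟨y, by simp [pV, Finset.mem_filter, hx, hu, hv], Sym2.eq_swap⟩
          · obtain ⟨heq, hc, hy, hx⟩ := h
            subst heq
            refine ⟨c', hc, Or.inl ?_⟩
            simp only [triE, Finset.mem_image, Finset.mem_offDiag]
            refine ⟨(Sum.inr (c',x), Sum.inr (c',y)), ⟨?_, ?_, hne⟩, rfl⟩ <;>
              · simp only [Finset.mem_image, sV, Finset.mem_filter]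
                first
                | exact ⟨x, ⟨hx, hu⟩, rfl⟩
                | exact ⟨y, ⟨hy, hv⟩, rfl⟩
      · intro he
        simp only [allE, Finset.mem_biUnion, Finset.mem_union] at he
        obtain ⟨c, hc, h | h⟩ := he
        · simp only [triE, Finset.mem_image, Finset.mem_offDiag] at h
          obtain ⟨⟨p1, p2⟩, ⟨h1, h2, hne⟩, heq⟩ := h
          simp only [Function.uncurry_apply_pair] at heq
          simp only [Finset.mem_image] at h1 h2
          obtain ⟨x, hx, rfl⟩ := h1
          obtain ⟨y, hy, rfl⟩ := h2
          simp only [sV, Finset.mem_filter] at hx hy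
          rw [Sym2.eq_iff] at heq
          constructor
          · rw [sigmaGraph, SimpleGraph.fromRel_adj]
            rcases heq with ⟨rfl, rfl⟩ | ⟨rfl, rfl⟩
            · exact ⟨hne, Or.inl ⟨rfl, hc, hx.1, hy.1⟩⟩
            · exact ⟨hne.symm, Or.inl ⟨rfl, hc, hy.1, hx.1⟩⟩
          · intro w hw
            rw [Sym2.mem_iff] at hw
            rcases heq with ⟨rfl, rfl⟩ | ⟨rfl, rfl⟩ <;> rcases hw with rfl | rfl <;>
              first | exact hx.2 | exact hy.2
        · simp only [penE, Finset.mem_image] at h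
          obtain ⟨x, hx, heq⟩ := h
          simp only [pV, Finset.mem_filter] at hx
          rw [Sym2.eq_iff] at heq
          constructor
          · rw [sigmaGraph, SimpleGraph.fromRel_adj]
            rcases heq with ⟨rfl, rfl⟩ | ⟨rfl, rfl⟩
            · exact ⟨by simp, Or.inl ⟨hc, hx.1, rfl⟩⟩
            · exact ⟨by simp, Or.inr ⟨hc, hx.1, rfl⟩⟩
          · intro w hw
            rw [Sym2.mem_iff] at hw
            rcases heq with ⟨rfl, rfl⟩ | ⟨rfl, rfl⟩ <;> rcases hw with rfl | rfl <;>
              first | exact hx.2.1 | exact hx.2.2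
  rw [edgesIn, hset, Set.ncard_coe_finset]


lemma shapeTri {S : Finset (α ⊕ Finset α × α)} {c : Finset α} {e}
    (he : e ∈ triE S c) :
    ∃ x y, e = s((Sum.inr (c,x) : α ⊕ Finset α × α), Sum.inr (c,y)) := by
  simp only [triE, Finset.mem_image, Finset.mem_offDiag] at he
  obtain ⟨⟨p1, p2⟩, ⟨h1, h2, hne⟩, heq⟩ := he
  simp only [Finset.mem_image] at h1 h2
  obtain ⟨x, _, rfl⟩ := h1
  obtain ⟨y, _, rfl⟩ := h2
  exact ⟨x, y, heq.symm⟩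

lemma shapePen {S : Finset (α ⊕ Finset α × α)} {c : Finset α} {e}
    (he : e ∈ penE S c) :
    ∃ x, e = s((Sum.inl x : α ⊕ Finset α × α), Sum.inr (c,x)) := by
  simp only [penE, Finset.mem_image] at he
  obtain ⟨x, _, rfl⟩ := he
  exact ⟨x, rfl⟩

lemma card_allE (C : Finset (Finset α)) (S : Finset (α ⊕ Finset α × α)) :
    (allE C S).card = (∑ c ∈ C, (sV S c).card.choose 2) + ∑ c ∈ C, (pV S c).card := by
  rw [allE, Finset.card_biUnion, ← Finset.sum_add_distrib]
  · refine Finset.sum_congr rfl fun c _ => ?_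
    rw [Finset.card_union_of_disjoint, triE, Sym2.card_image_offDiag,
      Finset.card_image_of_injective _ (fun a b hab => by
        simpa using hab), penE, Finset.card_image_of_injective]
    · intro a b hab
      simpa using hab
    · rw [Finset.disjoint_left]
      intro e he hpe
      obtain ⟨a, b, rfl⟩ := shapeTri he
      obtain ⟨x, heq⟩ := shapePen hpe
      rw [Sym2.eq_iff] at heq
      rcases heq with ⟨h1, h2⟩ | ⟨h1, h2⟩
      · exact absurd h1 (by simp)
      · exact absurd h2 (by simp)
  · intro c _ c' _ hne
    rw [Function.onFun, Finset.disjoint_left]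
    intro e he he'
    have hsh : ∀ {d : Finset α}, e ∈ triE S d ∪ penE S d →
        ∃ x, (Sum.inr (d, x) : α ⊕ Finset α × α) ∈ e := by
      intro d hd
      rcases Finset.mem_union.mp hd with h | h
      · obtain ⟨a, b, rfl⟩ := shapeTri h
        exact ⟨a, by simp⟩
      · obtain ⟨a, rfl⟩ := shapePen h
        exact ⟨a, by simp⟩
    have honly : ∀ v ∈ e, ∀ d x, v = (Sum.inr (d, x) : α ⊕ Finset α × α) → d = c := by
      rcases Finset.mem_union.mp he with h | h
      · obtain ⟨a, b, rfl⟩ := shapeTri h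
        intro v hv d x hvx
        rw [Sym2.mem_iff] at hv
        rcases hv with rfl | rfl <;> · simp only [Sum.inr.injEq, Prod.mk.injEq] at hvx
                                       exact hvx.1.symm
      · obtain ⟨a, rfl⟩ := shapePen h
        intro v hv d x hvx
        rw [Sym2.mem_iff] at hv
        rcases hv with rfl | rfl
        · exact absurd hvx (by simp)
        · simp only [Sum.inr.injEq, Prod.mk.injEq] at hvx
          exact hvx.1.symm
    obtain ⟨x, hx⟩ := hsh he'
    exact hne ((honly _ hx c' x rfl).symm)

lemma edgesIn_formula (C : Finset (Finset α)) (S : Finset (α ⊕ Finset α × α)) :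
    edgesIn (sigmaGraph C) S = (∑ c ∈ C, (sV S c).card.choose 2) + ∑ c ∈ C, (pV S c).card := by
  rw [edgesIn_eq, card_allE]


lemma mem_sigmaVerts_inl {X : Finset α} {C : Finset (Finset α)} {x : α} :
    (Sum.inl x : α ⊕ Finset α × α) ∈ sigmaVerts X C ↔ x ∈ X := by
  simp [sigmaVerts]

lemma mem_sigmaVerts_inr {X : Finset α} {C : Finset (Finset α)} {c : Finset α} {x : α} :
    (Sum.inr (c, x) : α ⊕ Finset α × α) ∈ sigmaVerts X C ↔ c ∈ C ∧ x ∈ c := by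
  simp only [sigmaVerts, Finset.mem_union, Finset.mem_image, Finset.mem_biUnion]
  constructor
  · rintro (⟨y, _, h⟩ | ⟨c', hc', y, hy, h⟩)
    · exact absurd h (by simp)
    · simp only [Sum.inr.injEq, Prod.mk.injEq] at h
      obtain ⟨rfl, rfl⟩ := h
      exact ⟨hc', hy⟩
  · rintro ⟨hc, hx⟩
    exact Or.inr ⟨c, hc, x, hx, rfl⟩

lemma card_decomp {X : Finset α} {C : Finset (Finset α)} {S : Finset (α ⊕ Finset α × α)}
    (hS : S ⊆ sigmaVerts X C) :
    S.card = (X.filter fun x => Sum.inl x ∈ S).card + ∑ c ∈ C, (sV S c).card := by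
  have hsplit := Finset.card_filter_add_card_filter_not
    (s := S) (p := fun v => v.isLeft = true)
  have hL : S.filter (fun v => v.isLeft = true) = (X.filter fun x => Sum.inl x ∈ S).image Sum.inl := by
    ext v
    simp only [Finset.mem_filter, Finset.mem_image]
    constructor
    · rintro ⟨hv, hleft⟩
      rcases v with x | p
      · exact ⟨x, ⟨mem_sigmaVerts_inl.mp (hS hv), hv⟩, rfl⟩
      · simp at hleft
    · rintro ⟨x, ⟨_, hx⟩, rfl⟩
      exact ⟨hx, rfl⟩
  have hR : S.filter (fun v => ¬ ((fun v : α ⊕ Finset α × α => v.isLeft = true) v))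
      = C.biUnion fun c => (sV S c).image fun x => Sum.inr (c, x) := by
    ext v
    simp only [Finset.mem_filter, Finset.mem_biUnion, Finset.mem_image]
    constructor
    · rintro ⟨hv, hleft⟩
      rcases v with x | ⟨c, x⟩
      · simp at hleft
      · have := mem_sigmaVerts_inr.mp (hS hv)
        exact ⟨c, this.1, x, by simp [sV, Finset.mem_filter, this.2, hv], rfl⟩
    · rintro ⟨c, hc, x, hx, rfl⟩
      simp only [sV, Finset.mem_filter] at hx
      exact ⟨hx.2, by simp⟩
  rw [hL, hR] at hsplit
  rw [← hsplit, Finset.card_image_of_injective _ Sum.inl_injective, Finset.card_biUnion]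
  · congr 1
    refine Finset.sum_congr rfl fun c _ => ?_
    exact Finset.card_image_of_injective _ (fun a b hab => by simpa using hab)
  · intro c _ c' _ hne
    rw [Function.onFun, Finset.disjoint_left]
    rintro v hv hv'
    simp only [Finset.mem_image] at hv hv'
    obtain ⟨x, _, rfl⟩ := hv
    obtain ⟨y, _, h⟩ := hv'
    simp only [Sum.inr.injEq, Prod.mk.injEq] at h
    exact hne h.1.symm


lemma key {X : Finset α} {C : Finset (Finset α)} {S : Finset (α ⊕ Finset α × α)}
    (hC3 : ∀ c ∈ C, c.card = 3) (hCX : ∀ c ∈ C, c ⊆ X)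
    (hS : S ⊆ sigmaVerts X C) (hne : S.Nonempty) :
    6 * edgesIn (sigmaGraph C) S ≤ S.card * (S.card + ∑ c ∈ C, (sV S c).card) ∧
      (6 * edgesIn (sigmaGraph C) S = S.card * (S.card + ∑ c ∈ C, (sV S c).card) →
        (∃ x ∈ X, ∃ c ∈ C, x ∈ c ∧ S = {Sum.inl x, Sum.inr (c, x)}) ∨
          (∃ c ∈ C, S = c.image fun x => Sum.inr (c, x))) := by
  have hcard : S.card = (X.filter fun x => Sum.inl x ∈ S).card + ∑ c ∈ C, (sV S c).card :=
    card_decomp hS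
  set a := (X.filter fun x => Sum.inl x ∈ S).card with ha
  set σ := ∑ c ∈ C, (sV S c).card with hσdef
  have hE := edgesIn_formula C S
  set Tch := ∑ c ∈ C, (sV S c).card.choose 2 with hTch
  set P := ∑ c ∈ C, (pV S c).card with hP
  have hs3 : ∀ c ∈ C, (sV S c).card ≤ 3 := fun c hc => by
    calc (sV S c).card ≤ c.card := Finset.card_le_card (Finset.filter_subset _ _)
    _ = 3 := hC3 c hc
  have hsσ : ∀ c ∈ C, (sV S c).card ≤ σ := fun c hc =>
    Finset.single_le_sum (f := fun c => (sV S c).card) (fun _ _ => Nat.zero_le _) hc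
  have hps : ∀ c ∈ C, (pV S c).card ≤ (sV S c).card := fun c hc =>
    Finset.card_le_card (fun x hx => by
      simp only [pV, Finset.mem_filter] at hx
      simp only [sV, Finset.mem_filter]
      exact ⟨hx.1, hx.2.2⟩)
  have hpa : ∀ c ∈ C, (pV S c).card ≤ a := fun c hc =>
    Finset.card_le_card (fun x hx => by
      simp only [pV, Finset.mem_filter] at hx
      simp only [Finset.mem_filter]
      exact ⟨hCX c hc hx.1, hx.2.1⟩)
  have htri : ∀ c ∈ C, 6 * (sV S c).card.choose 2 ≤ 2 * ((sV S c).card * σ) := by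
    intro c hc
    have h1 := hs3 c hc
    have h2 := hsσ c hc
    set k := (sV S c).card with hk
    interval_cases k <;> simp [Nat.choose] <;> omega
  have htriS : 6 * Tch ≤ 2 * (σ * σ) := by
    rw [hTch, Finset.mul_sum]
    calc ∑ c ∈ C, 6 * (sV S c).card.choose 2 ≤ ∑ c ∈ C, 2 * ((sV S c).card * σ) :=
          Finset.sum_le_sum htri
    _ = 2 * (σ * σ) := by rw [← Finset.mul_sum, ← Finset.sum_mul]
  rw [hE, hcard]
  -- case analysis on a
  rcases Nat.lt_or_ge a 2 with ha2 | ha2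
  swap
  · -- a ≥ 2 : strict
    have hPσ : P ≤ σ := by
      rw [hP, hσdef]; exact Finset.sum_le_sum hps
    constructor
    · nlinarith
    · intro heq; exfalso; nlinarith
  interval_cases a
  · -- a = 0
    have hp0 : P = 0 := by
      rw [hP]
      exact Finset.sum_eq_zero fun c hc => Nat.le_zero.mp (hpa c hc)
    constructor
    · rw [hp0]; nlinarith
    · intro heq
      rw [hp0] at heq
      have heqs : 6 * Tch = 2 * (σ * σ) := by nlinarith
      have hper : ∀ c ∈ C, 6 * (sV S c).card.choose 2 = 2 * ((sV S c).card * σ) := by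
        rw [hTch, Finset.mul_sum] at heqs
        refine (Finset.sum_eq_sum_iff_of_le htri).mp ?_
        rw [heqs, ← Finset.mul_sum, ← Finset.sum_mul]
      have hσ0 : σ ≠ 0 := by
        intro h0
        have : S.card = 0 := by omega
        exact absurd (Finset.card_eq_zero.mp this) (Finset.nonempty_iff_ne_empty.mp hne)
      obtain ⟨c0, hc0, hs0⟩ : ∃ c0 ∈ C, (sV S c0).card ≠ 0 := by
        by_contra hall
        push_neg at hall
        exact hσ0 (Finset.sum_eq_zero hall)
      have h33 : (sV S c0).card = 3 ∧ σ = 3 := by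
        have heqc := hper c0 hc0
        have h1 := hs3 c0 hc0
        have h2 := hsσ c0 hc0
        set k := (sV S c0).card with hk
        interval_cases k <;> simp [Nat.choose] at heqc ⊢ <;> omega
      have hsVeq : sV S c0 = c0 :=
        Finset.eq_of_subset_of_card_le (Finset.filter_subset _ _)
          (by rw [hC3 c0 hc0, h33.1])
      refine Or.inr ⟨c0, hc0, ?_⟩
      have hsub : (c0.image fun x => (Sum.inr (c0, x) : α ⊕ Finset α × α)) ⊆ S := by
        intro v hv
        simp only [Finset.mem_image] at hv
        obtain ⟨x, hx, rfl⟩ := hv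
        have : x ∈ sV S c0 := hsVeq.symm ▸ hx
        simp only [sV, Finset.mem_filter] at this
        exact this.2
      refine (Finset.eq_of_subset_of_card_le hsub ?_).symm
      rw [Finset.card_image_of_injective _ (fun x y hxy => by simpa using hxy),
        hC3 c0 hc0]
      omega
  · -- a = 1
    obtain ⟨x, hxeq⟩ := Finset.card_eq_one.mp ha.symm
    have hxX : x ∈ X ∧ Sum.inl x ∈ S := by
      have : x ∈ X.filter fun x => Sum.inl x ∈ S := hxeq ▸ Finset.mem_singleton_self x
      simpa using this
    have hp1 : ∀ c ∈ C, (pV S c).card ≤ 1 := fun c hc => hpa c hc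
    set T := C.filter fun c => ((pV S c).card ≠ 0) with hT
    have hPT : P ≤ T.card := by
      rw [hP]
      calc ∑ c ∈ C, (pV S c).card = ∑ c ∈ T, (pV S c).card := by
            refine (Finset.sum_subset (Finset.filter_subset _ _) ?_).symm
            intro c hc hcT
            simp only [hT, Finset.mem_filter, not_and, not_not] at hcT
            exact hcT hc
      _ ≤ ∑ _c ∈ T, 1 := Finset.sum_le_sum fun c hc =>
            hp1 c (Finset.mem_of_mem_filter c hc)
      _ = T.card := by simp
    by_cases hT2 : 2 ≤ T.card
    · -- strict case
      have hper : ∀ c ∈ C, 6 * (sV S c).card.choose 2 + 6 * (pV S c).card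
          ≤ 2 * ((sV S c).card * σ) + 3 * (sV S c).card := by
        intro c hc
        by_cases hpc : (pV S c).card = 0
        · rw [hpc]
          have := htri c hc
          omega
        · have hpc1 : (pV S c).card = 1 := by
            have := hp1 c hc; omega
          have hcT : c ∈ T := by
            simp only [hT, Finset.mem_filter]
            exact ⟨hc, hpc⟩
          obtain ⟨c', hc'T, hcc'⟩ := Finset.exists_mem_ne (s := T) (by omega) c
          have hc'C : c' ∈ C := Finset.mem_of_mem_filter c' hc'T
          have hsc' : 1 ≤ (sV S c').card := by
            have h1 : (pV S c').card ≠ 0 := (Finset.mem_filter.mp hc'T).2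
            have := hps c' hc'C
            omega
          have hσge : (sV S c).card + (sV S c').card ≤ σ := by
            rw [hσdef]
            have hsub : ({c, c'} : Finset (Finset α)) ⊆ C := by
              intro d hd
              simp only [Finset.mem_insert, Finset.mem_singleton] at hd
              rcases hd with rfl | rfl <;> assumption
            calc (sV S c).card + (sV S c').card
                = ∑ d ∈ ({c, c'} : Finset (Finset α)), (sV S d).card := by
                  rw [Finset.sum_pair (Ne.symm hcc')]
            _ ≤ _ := Finset.sum_le_sum_of_subset hsub
          have h1 := hs3 c hc
          have hs1 : 1 ≤ (sV S c).card := by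
            have := hps c hc; omega
          set k := (sV S c).card with hk
          interval_cases k <;> simp [Nat.choose] <;> omega
      have hsum : 6 * Tch + 6 * P ≤ 2 * (σ * σ) + 3 * σ := by
        rw [hTch, hP, Finset.mul_sum, Finset.mul_sum, ← Finset.sum_add_distrib]
        calc ∑ c ∈ C, (6 * (sV S c).card.choose 2 + 6 * (pV S c).card)
            ≤ ∑ c ∈ C, (2 * ((sV S c).card * σ) + 3 * (sV S c).card) :=
              Finset.sum_le_sum hper
        _ = 2 * (σ * σ) + 3 * σ := by
              rw [Finset.sum_add_distrib, ← Finset.mul_sum, ← Finset.mul_sum,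
                ← Finset.sum_mul]
      constructor
      · nlinarith
      · intro heq; exfalso; nlinarith
    · -- T.card ≤ 1, so P ≤ 1
      have hP1 : P ≤ 1 := by omega
      by_cases hP0 : P = 0
      · constructor
        · rw [hP0]; nlinarith
        · intro heq; exfalso; rw [hP0] at heq; nlinarith
      · have hPeq : P = 1 := by omega
        obtain ⟨c0, hc0, hpc0⟩ : ∃ c0 ∈ C, (pV S c0).card ≠ 0 := by
          by_contra hall
          push_neg at hall
          exact hP0 (Finset.sum_eq_zero hall)
        have hσ1 : 1 ≤ σ := by
          have h1 := hps c0 hc0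
          have h2 := hsσ c0 hc0
          omega
        by_cases hσeq : σ = 1
        · -- equality case: pendant edge
          have hch0 : Tch = 0 := by
            rw [hTch]
            refine Finset.sum_eq_zero fun c hc => ?_
            have := hsσ c hc
            rw [hσeq] at this
            interval_cases h : (sV S c).card <;> simp [Nat.choose]
          have hshape : (∃ x ∈ X, ∃ c ∈ C, x ∈ c ∧
              S = {Sum.inl x, Sum.inr (c, x)}) := by
            obtain ⟨y, hy⟩ := Finset.card_pos.mp (Nat.pos_of_ne_zero hpc0)
            simp only [pV, Finset.mem_filter] at hy
            have hyX : y ∈ X := hCX c0 hc0 hy.1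
            have hyx : y = x := by
              have : y ∈ X.filter fun z => Sum.inl z ∈ S := by
                simp only [Finset.mem_filter]
                exact ⟨hyX, hy.2.1⟩
              rw [hxeq] at this
              simpa using this
            subst hyx
            refine ⟨y, hyX, c0, hc0, hy.1, ?_⟩
            have hsub : ({Sum.inl y, Sum.inr (c0, y)} : Finset (α ⊕ Finset α × α)) ⊆ S := by
              intro v hv
              simp only [Finset.mem_insert, Finset.mem_singleton] at hv
              rcases hv with rfl | rfl
              · exact hy.2.1
              · exact hy.2.2
            refine (Finset.eq_of_subset_of_card_le hsub ?_).symm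
            rw [Finset.card_insert_of_notMem (by simp), Finset.card_singleton]
            omega
          constructor
          · rw [hch0, hPeq, hσeq]
          · intro _; exact Or.inl hshape
        · -- σ ≥ 2 : strict
          have hσ2 : 2 ≤ σ := by omega
          constructor
          · rw [hPeq]; nlinarith
          · intro heq; exfalso; rw [hPeq] at heq; nlinarith


lemma double_count (C : Finset (Finset α)) (X : Finset α) (hCX : ∀ c ∈ C, c ⊆ X) :
    ∑ c ∈ C, c.card = ∑ x ∈ X, (C.filter fun c => x ∈ c).card := by
  have h1 : ∀ c ∈ C, c.card = ∑ x ∈ X, (if x ∈ c then 1 else 0) := by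
    intro c hc
    rw [← Finset.card_filter]
    congr 1
    ext x
    simp only [Finset.mem_filter]
    exact ⟨fun h => ⟨hCX c hc h, h⟩, fun h => h.2⟩
  rw [Finset.sum_congr rfl h1, Finset.sum_comm]
  exact Finset.sum_congr rfl fun x _ => (Finset.card_filter _ _).symm

lemma card_C_eq {C : Finset (Finset α)} {X : Finset α} {q : ℕ} (hX : X.card = 3 * q)
    (hC3 : ∀ c ∈ C, c.card = 3) (hCX : ∀ c ∈ C, c ⊆ X)
    (hx3 : ∀ x ∈ X, (C.filter fun c => x ∈ c).card = 3) : C.card = 3 * q := by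
  have h := double_count C X hCX
  rw [Finset.sum_congr rfl hC3, Finset.sum_congr rfl hx3, Finset.sum_const,
    Finset.sum_const, smul_eq_mul, smul_eq_mul, hX] at h
  omega

lemma card_sigmaVerts {C : Finset (Finset α)} {X : Finset α}
    (hC3 : ∀ c ∈ C, c.card = 3) :
    (sigmaVerts X C).card = X.card + 3 * C.card := by
  rw [sigmaVerts, Finset.card_union_of_disjoint, Finset.card_image_of_injective _
    Sum.inl_injective, Finset.card_biUnion]
  · congr 1
    rw [Finset.sum_congr rfl fun c hc => Finset.card_image_of_injective _
      (fun a b hab => by simpa using hab), Finset.sum_congr rfl hC3,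
      Finset.sum_const, smul_eq_mul]
    ring
  · intro c _ c' _ hne
    rw [Function.onFun, Finset.disjoint_left]
    rintro v hv hv'
    simp only [Finset.mem_image] at hv hv'
    obtain ⟨y, _, rfl⟩ := hv
    obtain ⟨y', _, h⟩ := hv'
    simp only [Sum.inr.injEq, Prod.mk.injEq] at h
    exact hne h.1.symm
  · rw [Finset.disjoint_left]
    rintro v hv hv'
    simp only [Finset.mem_image, Finset.mem_biUnion] at hv hv'
    obtain ⟨y, _, rfl⟩ := hv
    obtain ⟨c, _, y', _, h⟩ := hv'
    exact absurd h (by simp)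

lemma parts_filter_card {X : Finset α} {C : Finset (Finset α)}
    (P : Finpartition (sigmaVerts X C)) {v : α ⊕ Finset α × α} (hv : v ∈ sigmaVerts X C) :
    (P.parts.filter fun t => v ∈ t).card = 1 := by
  obtain ⟨t, ⟨⟨htp, hvt⟩, huniq⟩⟩ := P.existsUnique_mem hv
  rw [Finset.card_eq_one]
  refine ⟨t, ?_⟩
  ext t'
  simp only [Finset.mem_filter, Finset.mem_singleton]
  constructor
  · rintro ⟨h1, h2⟩
    exact huniq t' ⟨h1, h2⟩
  · rintro rfl
    exact ⟨htp, hvt⟩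

lemma sum_parts_sV {X : Finset α} {C : Finset (Finset α)}
    (P : Finpartition (sigmaVerts X C)) {c : Finset α} (hc : c ∈ C) :
    ∑ t ∈ P.parts, (sV t c).card = c.card := by
  have h1 : ∀ t, (sV t c).card = ∑ x ∈ c, (if Sum.inr (c, x) ∈ t then 1 else 0) := by
    intro t
    rw [sV, Finset.card_filter]
  rw [Finset.sum_congr rfl fun t _ => h1 t, Finset.sum_comm]
  rw [Finset.card_eq_sum_ones c]
  refine Finset.sum_congr rfl fun x hx => ?_
  rw [← Finset.card_filter]
  exact parts_filter_card P (mem_sigmaVerts_inr.mpr ⟨hc, hx⟩)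

lemma sum_parts_aV {X : Finset α} {C : Finset (Finset α)}
    (P : Finpartition (sigmaVerts X C)) :
    ∑ t ∈ P.parts, (X.filter fun x => Sum.inl x ∈ t).card = X.card := by
  have h1 : ∀ t : Finset (α ⊕ Finset α × α),
      (X.filter fun x => Sum.inl x ∈ t).card = ∑ x ∈ X, (if Sum.inl x ∈ t then 1 else 0) := by
    intro t
    rw [Finset.card_filter]
  rw [Finset.sum_congr rfl fun t _ => h1 t, Finset.sum_comm]
  rw [Finset.card_eq_sum_ones X]
  refine Finset.sum_congr rfl fun x hx => ?_
  rw [← Finset.card_filter]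
  exact parts_filter_card P (mem_sigmaVerts_inl.mpr hx)


lemma density_pendant {C : Finset (Finset α)} {c : Finset α} {x : α}
    (hc : c ∈ C) (hx : x ∈ c) :
    density (sigmaGraph C) {Sum.inl x, Sum.inr (c, x)} = 1/2 := by
  set S : Finset (α ⊕ Finset α × α) := {Sum.inl x, Sum.inr (c, x)} with hSdef
  have hcardS : S.card = 2 := by
    rw [hSdef, Finset.card_insert_of_notMem (by simp), Finset.card_singleton]
  have hch : ∀ d ∈ C, (sV S d).card.choose 2 = 0 := by
    intro d _
    have hsub : sV S d ⊆ {x} := by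
      intro y hy
      simp only [sV, Finset.mem_filter, hSdef, Finset.mem_insert,
        Finset.mem_singleton] at hy
      rcases hy.2 with h | h
      · exact absurd h (by simp)
      · simp only [Sum.inr.injEq, Prod.mk.injEq] at h
        simp [h.2]
    have := Finset.card_le_card hsub
    simp only [Finset.card_singleton] at this
    exact Nat.choose_eq_zero_of_lt (by omega)
  have hpen : ∀ d ∈ C, d ≠ c → (pV S d).card = 0 := by
    intro d _ hd
    rw [Finset.card_eq_zero]
    rw [Finset.eq_empty_iff_forall_notMem]
    intro y hy
    simp only [pV, Finset.mem_filter, hSdef, Finset.mem_insert, Finset.mem_singleton] at hy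
    obtain ⟨_, h1, h2⟩ := hy
    rcases h2 with h | h
    · exact absurd h (by simp)
    · simp only [Sum.inr.injEq, Prod.mk.injEq] at h
      exact hd h.1
  have hpenc : (pV S c).card = 1 := by
    have : pV S c = {x} := by
      ext y
      simp only [pV, Finset.mem_filter, hSdef, Finset.mem_insert, Finset.mem_singleton]
      constructor
      · rintro ⟨_, h1, _⟩
        rcases h1 with h | h
        · simpa using h
        · exact absurd h (by simp)
      · rintro rfl
        exact ⟨hx, Or.inl rfl, Or.inr rfl⟩
    rw [this, Finset.card_singleton]
  have hE : edgesIn (sigmaGraph C) S = 1 := by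
    rw [edgesIn_formula, Finset.sum_congr rfl hch, Finset.sum_const, smul_eq_mul, mul_zero]
    rw [Finset.sum_eq_single_of_mem c hc (fun d hd hne => hpen d hd hne), hpenc]
  rw [density, hE, hcardS]
  norm_num

lemma density_triangle {C : Finset (Finset α)} {c : Finset α}
    (hc : c ∈ C) (h3 : c.card = 3) :
    density (sigmaGraph C) (c.image fun x => Sum.inr (c, x)) = 1 := by
  set S : Finset (α ⊕ Finset α × α) := c.image fun x => Sum.inr (c, x) with hSdef
  have hcardS : S.card = 3 := by
    rw [hSdef, Finset.card_image_of_injective _ (fun a b hab => by simpa using hab), h3]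
  have hsVc : sV S c = c := by
    ext y
    simp only [sV, Finset.mem_filter, hSdef, Finset.mem_image]
    constructor
    · exact fun h => h.1
    · exact fun h => ⟨h, y, h, rfl⟩
  have hch : ∀ d ∈ C, d ≠ c → (sV S d).card.choose 2 = 0 := by
    intro d _ hd
    have : sV S d = ∅ := by
      rw [Finset.eq_empty_iff_forall_notMem]
      intro y hy
      simp only [sV, Finset.mem_filter, hSdef, Finset.mem_image] at hy
      obtain ⟨z, _, h⟩ := hy.2
      simp only [Sum.inr.injEq, Prod.mk.injEq] at h
      exact hd h.1.symm
    rw [this]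
    simp
  have hpen : ∀ d ∈ C, (pV S d).card = 0 := by
    intro d _
    rw [Finset.card_eq_zero, Finset.eq_empty_iff_forall_notMem]
    intro y hy
    simp only [pV, Finset.mem_filter, hSdef, Finset.mem_image] at hy
    obtain ⟨_, ⟨z, _, h⟩, _⟩ := hy
    exact absurd h (by simp)
  have hE : edgesIn (sigmaGraph C) S = 3 := by
    rw [edgesIn_formula, Finset.sum_congr rfl hpen, Finset.sum_const, smul_eq_mul, mul_zero,
      add_zero]
    rw [Finset.sum_eq_single_of_mem c hc (fun d hd hne => hch d hd hne), hsVc, h3]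
    decide
  rw [density, hE, hcardS]
  norm_num


lemma forward {X : Finset α} {C : Finset (Finset α)} {q : ℕ} (hX : X.card = 3 * q)
    (hC3 : ∀ c ∈ C, c.card = 3) (hCX : ∀ c ∈ C, c ⊆ X)
    (hx3 : ∀ x ∈ X, (C.filter fun c => x ∈ c).card = 3)
    {C' : Finset (Finset α)} (hC'C : C' ⊆ C)
    (hcov : ∀ x ∈ X, (C'.filter fun c => x ∈ c).card = 1) :
    ∃ P : Finpartition (sigmaVerts X C),
      7 * (X.card : ℚ) / 6 ≤ ∑ p ∈ P.parts, density (sigmaGraph C) p := by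
  classical
  choose! f hf using fun x (hx : x ∈ X) => Finset.card_eq_one.mp (hcov x hx)
  have hfC' : ∀ x ∈ X, f x ∈ C' ∧ x ∈ f x := by
    intro x hx
    have : f x ∈ C'.filter fun c => x ∈ c := by
      rw [hf x hx]; simp
    simpa using this
  have huniq : ∀ x ∈ X, ∀ c ∈ C', x ∈ c → c = f x := by
    intro x hx c hc hxc
    have : c ∈ C'.filter fun c => x ∈ c := by simp [hc, hxc]
    rw [hf x hx] at this
    simpa using this
  set A : Finset (Finset (α ⊕ Finset α × α)) :=
    X.image fun x => {Sum.inl x, Sum.inr (f x, x)} with hA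
  set B : Finset (Finset (α ⊕ Finset α × α)) :=
    (C \ C').image fun c => c.image fun y => Sum.inr (c, y) with hB
  have hdisjAB : Disjoint A B := by
    rw [Finset.disjoint_left]
    intro t ht ht'
    simp only [hA, Finset.mem_image] at ht
    simp only [hB, Finset.mem_image] at ht'
    obtain ⟨x, hx, rfl⟩ := ht
    obtain ⟨c, hcc, hceq⟩ := ht'
    have : (Sum.inl x : α ⊕ Finset α × α) ∈ c.image fun y => Sum.inr (c, y) := by
      rw [hceq]; simp
    simp only [Finset.mem_image] at this
    obtain ⟨y, _, h⟩ := this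
    exact absurd h (by simp)
  have hpart : ∀ t1 ∈ A ∪ B, ∀ t2 ∈ A ∪ B, t1 ≠ t2 → Disjoint t1 t2 := by
    intro t1 ht1 t2 ht2 hne
    rw [Finset.mem_union] at ht1 ht2
    rw [Finset.disjoint_left]
    intro v hv1 hv2
    rcases ht1 with h1 | h1 <;> rcases ht2 with h2 | h2 <;>
      simp only [hA, hB, Finset.mem_image] at h1 h2
    · obtain ⟨x, hx, rfl⟩ := h1
      obtain ⟨y, hy, rfl⟩ := h2
      simp only [Finset.mem_insert, Finset.mem_singleton] at hv1 hv2
      rcases hv1 with rfl | rfl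
      · rcases hv2 with h | h
        · simp only [Sum.inl.injEq] at h
          subst h; exact hne rfl
        · exact absurd h (by simp)
      · rcases hv2 with h | h
        · exact absurd h (by simp)
        · simp only [Sum.inr.injEq, Prod.mk.injEq] at h
          obtain ⟨-, rfl⟩ := h
          exact hne rfl
    · obtain ⟨x, hx, rfl⟩ := h1
      obtain ⟨c, hcc, rfl⟩ := h2
      rw [Finset.mem_sdiff] at hcc
      simp only [Finset.mem_insert, Finset.mem_singleton] at hv1
      simp only [Finset.mem_image] at hv2
      obtain ⟨y, hyc, heq⟩ := hv2
      rcases hv1 with rfl | rfl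
      · exact absurd heq (by simp)
      · simp only [Sum.inr.injEq, Prod.mk.injEq] at heq
        obtain ⟨rfl, rfl⟩ := heq
        exact hcc.2 (hfC' _ hx).1
    · obtain ⟨c, hcc, rfl⟩ := h1
      obtain ⟨x, hx, rfl⟩ := h2
      rw [Finset.mem_sdiff] at hcc
      simp only [Finset.mem_insert, Finset.mem_singleton] at hv2
      simp only [Finset.mem_image] at hv1
      obtain ⟨y, hyc, heq⟩ := hv1
      rcases hv2 with rfl | rfl
      · exact absurd heq (by simp)
      · simp only [Sum.inr.injEq, Prod.mk.injEq] at heq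
        obtain ⟨rfl, rfl⟩ := heq
        exact hcc.2 (hfC' _ hx).1
    · obtain ⟨c, hcc, rfl⟩ := h1
      obtain ⟨c', hcc', rfl⟩ := h2
      simp only [Finset.mem_image] at hv1 hv2
      obtain ⟨y, hyc, rfl⟩ := hv1
      obtain ⟨y', hyc', heq⟩ := hv2
      simp only [Sum.inr.injEq, Prod.mk.injEq] at heq
      obtain ⟨rfl, rfl⟩ := heq
      exact hne rfl
  have hsup : (A ∪ B).sup id = sigmaVerts X C := by
    ext v
    rw [Finset.mem_sup]
    constructor
    · rintro ⟨t, ht, hvt⟩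
      rw [Finset.mem_union] at ht
      rcases ht with h | h <;> simp only [hA, hB, Finset.mem_image] at h
      · obtain ⟨x, hx, rfl⟩ := h
        simp only [id, Finset.mem_insert, Finset.mem_singleton] at hvt
        rcases hvt with rfl | rfl
        · exact mem_sigmaVerts_inl.mpr hx
        · exact mem_sigmaVerts_inr.mpr ⟨hC'C (hfC' x hx).1, (hfC' x hx).2⟩
      · obtain ⟨c, hcc, rfl⟩ := h
        rw [Finset.mem_sdiff] at hcc
        simp only [id, Finset.mem_image] at hvt
        obtain ⟨y, hyc, rfl⟩ := hvt
        exact mem_sigmaVerts_inr.mpr ⟨hcc.1, hyc⟩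
    · intro hv
      rcases v with x | ⟨c, y⟩
      · have hx := mem_sigmaVerts_inl.mp hv
        refine ⟨{Sum.inl x, Sum.inr (f x, x)}, ?_, by simp⟩
        rw [Finset.mem_union]
        exact Or.inl (Finset.mem_image_of_mem _ hx)
      · obtain ⟨hcC, hyc⟩ := mem_sigmaVerts_inr.mp hv
        by_cases hcC' : c ∈ C'
        · have hyX : y ∈ X := hCX c hcC hyc
          have : c = f y := huniq y hyX c hcC' hyc
          refine ⟨{Sum.inl y, Sum.inr (f y, y)}, ?_, by rw [← this]; simp⟩
          rw [Finset.mem_union]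
          exact Or.inl (Finset.mem_image_of_mem _ hyX)
        · refine ⟨c.image fun z => Sum.inr (c, z), ?_, by
            simp only [id, Finset.mem_image]; exact ⟨y, hyc, rfl⟩⟩
          rw [Finset.mem_union]
          refine Or.inr (Finset.mem_image_of_mem _ ?_)
          rw [Finset.mem_sdiff]
          exact ⟨hcC, hcC'⟩
  have hnotbot : ⊥ ∉ A ∪ B := by
    rw [Finset.mem_union]
    rintro (h | h) <;> simp only [hA, hB, Finset.mem_image] at h
    · obtain ⟨x, _, h⟩ := h
      have : (Sum.inl x : α ⊕ Finset α × α) ∈ (⊥ : Finset (α ⊕ Finset α × α)) := by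
        rw [← h]; simp
      simp at this
    · obtain ⟨c, hcc, h⟩ := h
      rw [Finset.mem_sdiff] at hcc
      have h3 := hC3 c hcc.1
      have : c.Nonempty := Finset.card_pos.mp (by omega)
      obtain ⟨y, hy⟩ := this
      have : (Sum.inr (c, y) : α ⊕ Finset α × α) ∈ (⊥ : Finset (α ⊕ Finset α × α)) := by
        rw [← h]
        exact Finset.mem_image_of_mem _ hy
      simp at this
  refine ⟨⟨A ∪ B, Finset.supIndep_iff_pairwiseDisjoint.mpr ?_, hsup, hnotbot⟩, ?_⟩
  · intro t1 ht1 t2 ht2 hne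
    exact hpart t1 ht1 t2 ht2 hne
  · -- density computation
    have hC'q : C'.card = q := by
      have h := double_count C' X (fun c hc => hCX c (hC'C hc))
      rw [Finset.sum_congr rfl (fun c hc => hC3 c (hC'C hc)),
        Finset.sum_congr rfl hcov, Finset.sum_const, Finset.sum_const,
        smul_eq_mul, smul_eq_mul, hX] at h
      omega
    have hsum : ∑ p ∈ A ∪ B, density (sigmaGraph C) p
        = (X.card : ℚ) * (1/2) + ((C.card : ℚ) - C'.card) := by
      rw [Finset.sum_union hdisjAB]
      have hsA : ∑ p ∈ A, density (sigmaGraph C) p = (X.card : ℚ) * (1/2) := by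
        rw [hA, Finset.sum_image, Finset.sum_congr rfl
          (fun x hx => density_pendant (hC'C (hfC' x hx).1) (hfC' x hx).2),
          Finset.sum_const, nsmul_eq_mul]
        intro x hx y hy heq
        beta_reduce at heq
        have : (Sum.inl x : α ⊕ Finset α × α) ∈
            ({Sum.inl y, Sum.inr (f y, y)} : Finset (α ⊕ Finset α × α)) := by
          rw [← heq]; simp
        simp only [Finset.mem_insert, Finset.mem_singleton] at this
        rcases this with h | h
        · simpa using h
        · exact absurd h (by simp)
      have hsB : ∑ p ∈ B, density (sigmaGraph C) p = ((C.card : ℚ) - C'.card) := by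
        rw [hB, Finset.sum_image, Finset.sum_congr rfl
          (fun c hc => density_triangle (Finset.mem_sdiff.mp hc).1
            (hC3 c (Finset.mem_sdiff.mp hc).1)),
          Finset.sum_const, nsmul_eq_mul, mul_one,
          Finset.card_sdiff_of_subset hC'C, Nat.cast_sub (Finset.card_le_card hC'C)]
        intro c hc c' hc' heq
        beta_reduce at heq
        have h3 := hC3 c (Finset.mem_sdiff.mp hc).1
        have : c.Nonempty := Finset.card_pos.mp (by omega)
        obtain ⟨y, hy⟩ := this
        have : (Sum.inr (c, y) : α ⊕ Finset α × α) ∈ c'.image fun z => Sum.inr (c', z) := by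
          rw [← heq]
          exact Finset.mem_image_of_mem _ hy
        simp only [Finset.mem_image] at this
        obtain ⟨z, _, h⟩ := this
        simp only [Sum.inr.injEq, Prod.mk.injEq] at h
        exact h.1.symm
      rw [hsA, hsB]
    calc 7 * (X.card : ℚ) / 6 ≤ (X.card : ℚ) * (1/2) + ((C.card : ℚ) - C'.card) := by
          rw [hX, card_C_eq hX hC3 hCX hx3, hC'q]
          push_cast
          ring_nf
          exact le_refl _
    _ = _ := hsum.symm


lemma converse {X : Finset α} {C : Finset (Finset α)} {q : ℕ} (hX : X.card = 3 * q)
    (hC3 : ∀ c ∈ C, c.card = 3) (hCX : ∀ c ∈ C, c ⊆ X)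
    (hx3 : ∀ x ∈ X, (C.filter fun c => x ∈ c).card = 3)
    (P : Finpartition (sigmaVerts X C))
    (hge : 7 * (X.card : ℚ) / 6 ≤ ∑ p ∈ P.parts, density (sigmaGraph C) p) :
    ∃ C' ⊆ C, ∀ x ∈ X, (C'.filter fun c => x ∈ c).card = 1 := by
  classical
  have hCcard : C.card = 3 * q := card_C_eq hX hC3 hCX hx3
  have hkey := fun t (ht : t ∈ P.parts) =>
    key hC3 hCX (P.le ht) (P.nonempty_of_mem_parts ht)
  have hle : ∀ t ∈ P.parts, density (sigmaGraph C) t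
      ≤ (((t.card + ∑ c ∈ C, (sV t c).card : ℕ) : ℚ)) / 6 := by
    intro t ht
    have hpos : (0:ℚ) < (t.card : ℚ) := by
      have := Finset.card_pos.mpr (P.nonempty_of_mem_parts ht)
      exact_mod_cast this
    rw [density, div_le_div_iff₀ hpos (by norm_num)]
    have h' : ((6 * edgesIn (sigmaGraph C) t : ℕ) : ℚ)
        ≤ ((t.card * (t.card + ∑ c ∈ C, (sV t c).card) : ℕ) : ℚ) :=
      Nat.cast_le.mpr (hkey t ht).1
    push_cast at h' ⊢
    ring_nf at h' ⊢
    linarith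
  have hsumN : ∑ t ∈ P.parts, (t.card + ∑ c ∈ C, (sV t c).card) = 21 * q := by
    rw [Finset.sum_add_distrib, Finpartition.sum_card_parts, card_sigmaVerts hC3,
      Finset.sum_comm]
    rw [Finset.sum_congr rfl (fun c hc => sum_parts_sV P hc),
      Finset.sum_congr rfl hC3, Finset.sum_const, smul_eq_mul]
    omega
  have hsumbound : ∑ t ∈ P.parts, (((t.card + ∑ c ∈ C, (sV t c).card : ℕ) : ℚ)) / 6
      = 7 * (X.card : ℚ) / 6 := by
    rw [← Finset.sum_div, ← Nat.cast_sum, hsumN, hX]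
    push_cast
    ring
  have heqsum : ∑ p ∈ P.parts, density (sigmaGraph C) p
      = ∑ t ∈ P.parts, (((t.card + ∑ c ∈ C, (sV t c).card : ℕ) : ℚ)) / 6 := by
    refine le_antisymm (Finset.sum_le_sum hle) ?_
    rw [hsumbound]
    exact hge
  have hparteq := (Finset.sum_eq_sum_iff_of_le hle).mp heqsum
  have hshape : ∀ t ∈ P.parts,
      (∃ x ∈ X, ∃ c ∈ C, x ∈ c ∧ t = {Sum.inl x, Sum.inr (c, x)}) ∨
        (∃ c ∈ C, t = c.image fun x => Sum.inr (c, x)) := by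
    intro t ht
    refine (hkey t ht).2 ?_
    have h := hparteq t ht
    have hpos : (0:ℚ) < (t.card : ℚ) := by
      have := Finset.card_pos.mpr (P.nonempty_of_mem_parts ht)
      exact_mod_cast this
    rw [density, div_eq_div_iff hpos.ne' (by norm_num : (6:ℚ) ≠ 0)] at h
    have h6 : (6 * edgesIn (sigmaGraph C) t : ℚ)
        = (t.card * (t.card + ∑ c ∈ C, (sV t c).card) : ℚ) := by
      push_cast at h ⊢
      linarith
    exact_mod_cast h6
  set C' := C.filter (fun c => ∃ x ∈ c,
    ({Sum.inl x, Sum.inr (c, x)} : Finset (α ⊕ Finset α × α)) ∈ P.parts) with hC'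
  have claim1 : ∀ x ∈ X, ∃ c, c ∈ C ∧ x ∈ c ∧
      ({Sum.inl x, Sum.inr (c, x)} : Finset (α ⊕ Finset α × α)) ∈ P.parts := by
    intro x hx
    obtain ⟨t, ⟨ht, hvt⟩, -⟩ := P.existsUnique_mem (mem_sigmaVerts_inl.mpr hx)
    rcases hshape t ht with ⟨y, hyX, c, hc, hyc, rfl⟩ | ⟨c, hcC, rfl⟩
    · simp only [Finset.mem_insert, Finset.mem_singleton] at hvt
      rcases hvt with h | h
      · simp only [Sum.inl.injEq] at h
        subst h
        exact ⟨c, hc, hyc, ht⟩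
      · exact absurd h (by simp)
    · simp only [Finset.mem_image] at hvt
      obtain ⟨y, _, h⟩ := hvt
      exact absurd h (by simp)
  have claim2 : ∀ c ∈ C, ∀ x ∈ c,
      ({Sum.inl x, Sum.inr (c, x)} : Finset (α ⊕ Finset α × α)) ∈ P.parts →
      ∀ y ∈ c, ({Sum.inl y, Sum.inr (c, y)} : Finset (α ⊕ Finset α × α)) ∈ P.parts := by
    intro c hc x hxc hpp y hyc
    obtain ⟨t, ⟨ht, hvt⟩, -⟩ := P.existsUnique_mem (mem_sigmaVerts_inr.mpr ⟨hc, hyc⟩)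
    rcases hshape t ht with ⟨z, hzX, c'', hc'', hzc, rfl⟩ | ⟨c', hc', rfl⟩
    · simp only [Finset.mem_insert, Finset.mem_singleton] at hvt
      rcases hvt with h | h
      · exact absurd h (by simp)
      · simp only [Sum.inr.injEq, Prod.mk.injEq] at h
        obtain ⟨rfl, rfl⟩ := h
        exact ht
    · exfalso
      have hcc' : c' = c := by
        simp only [Finset.mem_image] at hvt
        obtain ⟨z, _, h⟩ := hvt
        simp only [Sum.inr.injEq, Prod.mk.injEq] at h
        exact h.1
      subst hcc'
      have hxmem : (Sum.inr (c', x) : α ⊕ Finset α × α)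
          ∈ c'.image fun z => Sum.inr (c', z) := Finset.mem_image_of_mem _ hxc
      have hxpend : (Sum.inr (c', x) : α ⊕ Finset α × α)
          ∈ ({Sum.inl x, Sum.inr (c', x)} : Finset (α ⊕ Finset α × α)) := by simp
      have heq := P.eq_of_mem_parts ht hpp hxmem hxpend
      have : (Sum.inl x : α ⊕ Finset α × α) ∈ c'.image fun z => Sum.inr (c', z) := by
        rw [heq]; simp
      simp only [Finset.mem_image] at this
      obtain ⟨z, _, h⟩ := this
      exact absurd h (by simp)
  refine ⟨C', Finset.filter_subset _ _, ?_⟩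
  intro x hx
  obtain ⟨c, hcC, hxc, hpp⟩ := claim1 x hx
  rw [Finset.card_eq_one]
  refine ⟨c, ?_⟩
  ext c2
  simp only [Finset.mem_filter, Finset.mem_singleton, hC']
  constructor
  · rintro ⟨⟨hc2C, y, hyc2, hypp⟩, hxc2⟩
    have hxpp : ({Sum.inl x, Sum.inr (c2, x)} : Finset (α ⊕ Finset α × α)) ∈ P.parts :=
      claim2 c2 hc2C y hyc2 hypp x hxc2
    have heq := P.eq_of_mem_parts hxpp hpp (Finset.mem_insert_self _ _) (Finset.mem_insert_self _ _)
    have : (Sum.inr (c2, x) : α ⊕ Finset α × α)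
        ∈ ({Sum.inl x, Sum.inr (c, x)} : Finset (α ⊕ Finset α × α)) := by
      rw [← heq]; simp
    simp only [Finset.mem_insert, Finset.mem_singleton] at this
    rcases this with h | h
    · exact absurd h (by simp)
    · simp only [Sum.inr.injEq, Prod.mk.injEq] at h
      exact h.1
  · rintro rfl
    exact ⟨⟨hcC, x, hxc, hpp⟩, hxc⟩

end St9

theorem stmt9 {α : Type*} [DecidableEq α] (X : Finset α) (C : Finset (Finset α))
    (q : ℕ) (hq : 1 ≤ q) (hX : X.card = 3 * q)
    (hC3 : ∀ c ∈ C, c.card = 3) (hCX : ∀ c ∈ C, c ⊆ X)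
    (hx3 : ∀ x ∈ X, (C.filter fun c => x ∈ c).card = 3) :
    (∃ C' ⊆ C, ∀ x ∈ X, (C'.filter fun c => x ∈ c).card = 1) ↔
      ∃ P : Finpartition (sigmaVerts X C),
        7 * (X.card : ℚ) / 6 ≤ partDensity (sigmaGraph C) P := by
  constructor
  · rintro ⟨C', hC'C, hcov⟩
    obtain ⟨P, hP⟩ := St9.forward hX hC3 hCX hx3 hC'C hcov
    exact ⟨P, hP⟩
  · rintro ⟨P, hP⟩
    exact St9.converse hX hC3 hCX hx3 P hP
end

section
/- Let G = (V,E) be a graph on n vertices with minimum degree δ(G) ≥ n−3. Then for every partition 𝒫 of V with at least 3 parts, d(𝒫) ≤ d(G); that is, the one-part partition {V} has density at least that of any partition into 3 or more parts. -/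
open Finset

lemma edgesIn_eq_filter {V : Type*} [Fintype V] [DecidableEq V] (G : SimpleGraph V) [DecidableRel G.Adj]
    (S : Finset V) :
    edgesIn G S = (G.edgeFinset.filter (fun e => ∀ v ∈ e, v ∈ S)).card := by
  have : {e : Sym2 V | e ∈ G.edgeSet ∧ ∀ v ∈ e, v ∈ S}
      = ↑(G.edgeFinset.filter (fun e => ∀ v ∈ e, v ∈ S)) := by
    ext e
    simp [SimpleGraph.mem_edgeFinset]
  rw [edgesIn, this, Set.ncard_coe_finset]

lemma edgesIn_le {V : Type*} [Fintype V] [DecidableEq V] (G : SimpleGraph V) [DecidableRel G.Adj]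
    (S : Finset V) : edgesIn G S ≤ S.card.choose 2 := by
  rw [edgesIn_eq_filter]
  rw [← Sym2.card_image_offDiag S]
  apply Finset.card_le_card
  intro e he
  rw [Finset.mem_filter] at he
  obtain ⟨he1, he2⟩ := he
  induction e with
  | _ a b =>
    have hab : G.Adj a b := by simpa [SimpleGraph.mem_edgeFinset] using he1
    refine Finset.mem_image.2 ⟨(a, b), ?_, rfl⟩
    exact Finset.mem_offDiag.2 ⟨he2 a (by simp), he2 b (by simp), hab.ne⟩

theorem stmt11 {V : Type*} [Fintype V] [DecidableEq V] (G : SimpleGraph V) [DecidableRel G.Adj]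
    (n : ℕ) (hn : Fintype.card V = n)
    (hδ : ∀ v : V, n ≤ G.degree v + 3)
    (P : Finpartition (univ : Finset V)) (hP : 3 ≤ P.parts.card) :
    partDensity G P ≤ density G (univ : Finset V) := by
  classical
  -- sizes
  have hsum : ∑ p ∈ P.parts, p.card = n := by
    rw [← hn, ← Finset.card_univ, ← P.sum_card_parts]
  have hpos : ∀ p ∈ P.parts, 0 < p.card := fun p hp =>
    Finset.card_pos.2 (P.nonempty_of_mem_parts hp)
  have hkn : P.parts.card ≤ n := by
    calc P.parts.card = ∑ p ∈ P.parts, 1 := by simp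
    _ ≤ ∑ p ∈ P.parts, p.card := Finset.sum_le_sum fun p hp => hpos p hp
    _ = n := hsum
  have hn3 : 3 ≤ n := le_trans hP hkn
  -- upper bound on partDensity
  have h1 : partDensity G P ≤ ((n : ℚ) - P.parts.card) / 2 := by
    rw [partDensity]
    have : ∀ p ∈ P.parts, density G p ≤ ((p.card : ℚ) - 1) / 2 := by
      intro p hp
      rw [density]
      have hc : (0 : ℚ) < (p.card : ℚ) := by exact_mod_cast hpos p hp
      rw [div_le_div_iff₀ hc (by norm_num)]
      have h := edgesIn_le G p
      have h2 : (edgesIn G p : ℚ) ≤ (p.card.choose 2 : ℚ) := by exact_mod_cast h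
      have h3 : (p.card.choose 2 : ℚ) = (p.card : ℚ) * ((p.card : ℚ) - 1) / 2 := by
        exact_mod_cast Nat.cast_choose_two (K := ℚ) p.card
      nlinarith [h2, h3]
    calc ∑ p ∈ P.parts, density G p ≤ ∑ p ∈ P.parts, ((p.card : ℚ) - 1) / 2 :=
          Finset.sum_le_sum this
    _ = ((n : ℚ) - P.parts.card) / 2 := by
        rw [← Finset.sum_div]
        congr 1
        rw [Finset.sum_sub_distrib]
        simp [← Nat.cast_sum, hsum]
  -- lower bound on density of univ
  have hedges : edgesIn G univ = G.edgeFinset.card := by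
    rw [edgesIn_eq_filter]
    congr 1
    apply Finset.filter_true_of_mem
    intros; exact Finset.mem_univ _
  have hhs : ∑ v, G.degree v = 2 * G.edgeFinset.card :=
    SimpleGraph.sum_degrees_eq_twice_card_edges G
  have hdeg : (n : ℚ) * ((n : ℚ) - 3) ≤ 2 * (G.edgeFinset.card : ℚ) := by
    have : ∀ v : V, (n : ℚ) - 3 ≤ (G.degree v : ℚ) := by
      intro v
      have := hδ v
      have : (n : ℚ) ≤ (G.degree v : ℚ) + 3 := by exact_mod_cast this
      linarith
    calc (n : ℚ) * ((n : ℚ) - 3) = ∑ _v : V, ((n : ℚ) - 3) := by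
          rw [Finset.sum_const, Finset.card_univ, hn]; ring
    _ ≤ ∑ v, (G.degree v : ℚ) := Finset.sum_le_sum fun v _ => this v
    _ = 2 * (G.edgeFinset.card : ℚ) := by exact_mod_cast hhs
  have h2 : ((n : ℚ) - 3) / 2 ≤ density G univ := by
    rw [density, hedges, Finset.card_univ, hn]
    have hnq : (0 : ℚ) < (n : ℚ) := by exact_mod_cast lt_of_lt_of_le (by norm_num) hn3
    rw [div_le_div_iff₀ (by norm_num) hnq]
    nlinarith [hdeg]
  have hk : (3 : ℚ) ≤ (P.parts.card : ℚ) := by exact_mod_cast hP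
  calc partDensity G P ≤ ((n : ℚ) - P.parts.card) / 2 := h1
  _ ≤ ((n : ℚ) - 3) / 2 := by linarith
  _ ≤ density G univ := h2
end

section
/- Let G = (V,E) be a graph on n vertices with minimum degree δ(G) ≥ n−3, and let o be the number of connected components of the complement graph of G that are cycles of odd length. Then for every partition {V_1, V_2} of V into two parts, the number of non-adjacent vertex pairs of G inside V_1 plus the number of non-adjacent vertex pairs of G inside V_2 is at least o. -/
open Finset

lemma adj_mem_supp {V : Type*} {H : SimpleGraph V} {K : H.ConnectedComponent} {u v : V}
    (h : H.Adj u v) (hu : u ∈ K.supp) : v ∈ K.supp := by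
  rw [SimpleGraph.ConnectedComponent.mem_supp_iff] at *
  rw [← hu]
  exact SimpleGraph.ConnectedComponent.sound h.symm.reachable

lemma exists_mono_edge {V : Type*} [Fintype V] [DecidableEq V] (H : SimpleGraph V)
    [DecidableRel H.Adj] (K : H.ConnectedComponent)
    (hdeg : ∀ v ∈ K.supp, H.degree v = 2) (hodd : Odd K.supp.ncard)
    (V₁ : Finset V) :
    ∃ u v, H.Adj u v ∧ u ∈ K.supp ∧
      ((u ∈ V₁ ∧ v ∈ V₁) ∨ (u ∉ V₁ ∧ v ∉ V₁)) := by
  classical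
  by_contra hcon
  push_neg at hcon
  set F := K.supp.toFinite.toFinset with hF
  set A := F.filter (· ∈ V₁) with hA
  set B := F.filter (· ∉ V₁) with hB
  have hmemF : ∀ v, v ∈ F ↔ v ∈ K.supp := fun v => Set.Finite.mem_toFinset _
  have hNA : ∀ a ∈ A, B.filter (H.Adj a) = H.neighborFinset a := by
    intro a ha
    rw [hA, Finset.mem_filter, hmemF] at ha
    ext x
    simp only [hB, Finset.mem_filter, SimpleGraph.mem_neighborFinset, hmemF]
    constructor
    · tauto
    · intro hx
      have hxs := adj_mem_supp hx ha.1
      have := hcon a x hx ha.1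
      tauto
  have hNB : ∀ b ∈ B, A.filter (fun a => H.Adj a b) = H.neighborFinset b := by
    intro b hb
    rw [hB, Finset.mem_filter, hmemF] at hb
    ext x
    simp only [hA, Finset.mem_filter, SimpleGraph.mem_neighborFinset, hmemF]
    constructor
    · intro h; exact h.2.symm
    · intro hx
      have hxs := adj_mem_supp hx hb.1
      have := hcon b x hx hb.1
      constructor
      · exact ⟨hxs, by tauto⟩
      · exact hx.symm
  have key : 2 * A.card = 2 * B.card := by
    calc 2 * A.card = ∑ a ∈ A, 2 := by rw [Finset.sum_const, smul_eq_mul, mul_comm]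
    _ = ∑ a ∈ A, (B.filter (H.Adj a)).card := by
        refine Finset.sum_congr rfl fun a ha => ?_
        rw [hNA a ha]
        have : a ∈ K.supp := by
          rw [hA, Finset.mem_filter, hmemF] at ha; exact ha.1
        rw [← hdeg a this, SimpleGraph.degree]
    _ = ∑ a ∈ A, ∑ b ∈ B, if H.Adj a b then 1 else 0 :=
        Finset.sum_congr rfl fun a _ => Finset.card_filter _ _
    _ = ∑ b ∈ B, ∑ a ∈ A, if H.Adj a b then 1 else 0 := Finset.sum_comm
    _ = ∑ b ∈ B, (A.filter (fun a => H.Adj a b)).card :=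
        Finset.sum_congr rfl fun b _ => (Finset.card_filter _ _).symm
    _ = ∑ b ∈ B, 2 := by
        refine Finset.sum_congr rfl fun b hb => ?_
        rw [hNB b hb]
        have : b ∈ K.supp := by
          rw [hB, Finset.mem_filter, hmemF] at hb; exact hb.1
        rw [← hdeg b this, SimpleGraph.degree]
    _ = 2 * B.card := by rw [Finset.sum_const, smul_eq_mul, mul_comm]
  have hcard : F.card = A.card + B.card := by
    rw [hA, hB]
    exact (Finset.card_filter_add_card_filter_not (fun x => x ∈ V₁)).symm
  rw [Set.ncard_eq_toFinset_card' ] at hodd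
  have : K.supp.toFinset.card = F.card := by
    congr 1
    ext x
    rw [Set.mem_toFinset, hmemF]
  rw [this, hcard] at hodd
  rcases hodd with ⟨k, hk⟩
  omega

theorem stmt12 {V : Type*} [Fintype V] [DecidableEq V] (G : SimpleGraph V) [DecidableRel G.Adj]
    (n : ℕ) (hn : Fintype.card V = n)
    (hδ : ∀ v : V, n ≤ G.degree v + 3)
    (o : ℕ)
    (ho : o = Set.ncard {K : Gᶜ.ConnectedComponent |
      (∀ v ∈ K.supp, Gᶜ.degree v = 2) ∧ Odd K.supp.ncard})
    (V₁ V₂ : Finset V) (h₁ : V₁.Nonempty) (h₂ : V₂.Nonempty)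
    (hdisj : Disjoint V₁ V₂) (hunion : V₁ ∪ V₂ = univ) :
    o ≤ edgesIn Gᶜ V₁ + edgesIn Gᶜ V₂ := by
  classical
  subst ho
  obtain ⟨v₀, -⟩ := h₁
  have hV₂ : ∀ v : V, v ∉ V₁ → v ∈ V₂ := by
    intro v h
    have hv := Finset.mem_univ v
    rw [← hunion, Finset.mem_union] at hv
    tauto
  set P := {K : Gᶜ.ConnectedComponent |
      (∀ v ∈ K.supp, Gᶜ.degree v = 2) ∧ Odd K.supp.ncard} with hP
  set E₁ := {e : Sym2 V | e ∈ Gᶜ.edgeSet ∧ ∀ v ∈ e, v ∈ V₁} with hE₁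
  set E₂ := {e : Sym2 V | e ∈ Gᶜ.edgeSet ∧ ∀ v ∈ e, v ∈ V₂} with hE₂
  have hex : ∀ K : Gᶜ.ConnectedComponent, ∃ e : Sym2 V, K ∈ P →
      (e ∈ E₁ ∪ E₂) ∧ (∀ w ∈ e, w ∈ K.supp) := by
    intro K
    by_cases hK : K ∈ P
    · obtain ⟨hdeg, hodd⟩ := hK
      obtain ⟨u, v, hadj, hu, hside⟩ := exists_mono_edge Gᶜ K hdeg hodd V₁
      refine ⟨s(u, v), fun _ => ⟨?_, ?_⟩⟩
      · rcases hside with ⟨ha, hb⟩ | ⟨ha, hb⟩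
        · left
          refine ⟨hadj, fun w hw => ?_⟩
          rcases Sym2.mem_iff.mp hw with rfl | rfl <;> assumption
        · right
          refine ⟨hadj, fun w hw => ?_⟩
          rcases Sym2.mem_iff.mp hw with rfl | rfl
          · exact hV₂ _ ha
          · exact hV₂ _ hb
      · intro w hw
        rcases Sym2.mem_iff.mp hw with rfl | rfl
        · exact hu
        · exact adj_mem_supp hadj hu
    · exact ⟨s(v₀, v₀), fun h => absurd h hK⟩
  choose f hf using hex
  have hmaps : ∀ K ∈ P, f K ∈ E₁ ∪ E₂ := fun K hK => (hf K hK).1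
  have hinj : Set.InjOn f P := by
    intro K₁ hK₁ K₂ hK₂ heq
    have hs₁ := (hf K₁ hK₁).2
    have hs₂ := (hf K₂ hK₂).2
    have hw : (f K₁).out.1 ∈ f K₁ := Sym2.out_fst_mem _
    have h1 : (f K₁).out.1 ∈ K₁.supp := hs₁ _ hw
    have h2 : (f K₁).out.1 ∈ K₂.supp := hs₂ _ (heq ▸ hw)
    rw [SimpleGraph.ConnectedComponent.mem_supp_iff] at h1 h2
    rw [← h1, ← h2]
  calc P.ncard ≤ (E₁ ∪ E₂).ncard :=
        Set.ncard_le_ncard_of_injOn f hmaps hinj (Set.toFinite _)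
    _ ≤ E₁.ncard + E₂.ncard := Set.ncard_union_le _ _
    _ = edgesIn Gᶜ V₁ + edgesIn Gᶜ V₂ := rfl
end
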